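/- arXiv:1904.09798 — 5 statements merged into one kernel-verified Lean document; each statement's English description precedes it below -/
import Mathlib

section
/- Let r be a positive odd integer, r' = (r+1)/2, and let P = {p_1,…,p_{r'}}, Q = {q_0,q_1,…,q_{r'}} ⊆ [n] with q_0 < p_1 < q_1 < p_2 < ⋯ < p_{r'} < q_{r'}, and X ⊆ [n]∖(P∪Q). Let Y ⊆ [n] be different from X∪P and from X∪Q. If Y and X∪Q are not weakly r-separated, then there exists S ∈ N↓(P,Q) such that Y and X∪S are not weakly r-separated. -/
open Finset

/-- An alternating sequence for the pair of sets `A`, `B`: a strictly increasing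
sequence whose odd-position elements lie in one of `A \ B`, `B \ A` and whose
even-position elements lie in the other. -/
def IsAltSeq (A B : Finset ℕ) {m : ℕ} (f : Fin m → ℕ) : Prop :=
  StrictMono f ∧
    ((∀ j : Fin m, (j : ℕ) % 2 = 0 → f j ∈ A \ B) ∧
        (∀ j : Fin m, (j : ℕ) % 2 = 1 → f j ∈ B \ A) ∨
      (∀ j : Fin m, (j : ℕ) % 2 = 0 → f j ∈ B \ A) ∧
        (∀ j : Fin m, (j : ℕ) % 2 = 1 → f j ∈ A \ B))

/-- `altLen A B` is the maximum length of an alternating sequence for `A`, `B`. -/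
noncomputable def altLen (A B : Finset ℕ) : ℕ :=
  sSup {m : ℕ | ∃ f : Fin m → ℕ, IsAltSeq A B f}

/-- `A` surrounds `B`:  `min (A \ B) < min (B \ A)` and `max (B \ A) < max (A \ B)`. -/
def Surrounds (A B : Finset ℕ) : Prop :=
  (A \ B).min < (B \ A).min ∧ (B \ A).max < (A \ B).max

/-- Weak `r`-separation for an odd `r`. -/
def WeaklySep (r : ℕ) (A B : Finset ℕ) : Prop :=
  altLen A B ≤ r + 2 ∧
    (altLen A B = r + 2 →
      Surrounds A B ∧ A.card ≤ B.card ∨ Surrounds B A ∧ B.card ≤ A.card)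

/-!
Write `t = (r + 1) / 2`, so that `r + 2 = 2t + 1`. In a longest alternating sequence of odd
length the two end terms lie in the class that surrounds the other one. Hence `Y` and
`B = X ∪ Q` fail to be weakly `r`-separated exactly when they admit an alternating sequence of
length `2t + 2`, or one of length `2t + 1` whose end terms lie in the strictly larger of `Y`, `B`.

Passing to `X ∪ S` with `S ∈ N↓(P, Q)` removes some `q j`, possibly adds some `p i`, and changes
the cardinality by `-1` or `0`. A witness for `(Y, B)` survives unless it uses the removed or
the added element. It has at most `t + 1` terms in each class, so it misses some `q j` unless
those terms are exactly `q 0, …, q t`. In that rigid case a new element (an element of `B \ Y`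
outside `Q`, an element of `Y \ B` outside `P`, some `p i ∉ Y` or some `q j ∈ Y`) takes the place
of a neighbouring term of its class or extends the witness at one end, or else the interlacing
`q 0 < p 0 < ⋯ < q t` itself, with one end term of the witness attached, is a new witness.
Counting with `|Y| - |B| = |Y \ B| - |B \ Y|` shows that one of these moves is available unless
`Y \ B = P` and `B \ Y = Q`, that is, unless `Y = X ∪ P`.
-/

def altSide (A B : Finset ℕ) (j : ℕ) : Finset ℕ :=
  if j % 2 = 0 then A \ B else B \ A

lemma mem_altSide_of_even {A B : Finset ℕ} {j x : ℕ} (hj : j % 2 = 0) :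
    x ∈ altSide A B j ↔ x ∈ A \ B := by
  simp [altSide, hj]

lemma mem_altSide_of_odd {A B : Finset ℕ} {j x : ℕ} (hj : j % 2 = 1) :
    x ∈ altSide A B j ↔ x ∈ B \ A := by
  simp [altSide, hj]

lemma altSide_succ (A B : Finset ℕ) (j : ℕ) : altSide B A (j + 1) = altSide A B j := by
  unfold altSide
  split_ifs <;> first | rfl | omega

lemma altSide_of_mod_eq (A B : Finset ℕ) {i j : ℕ} (h : i % 2 = j % 2) :
    altSide A B i = altSide A B j := by
  simp only [altSide, h]

def seqCons (x : ℕ) (g : ℕ → ℕ) : ℕ → ℕ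
  | 0 => x
  | j + 1 => g j

lemma exists_slot {g : ℕ → ℕ} {L x : ℕ} (hx : ∀ j < L, g j ≠ x) :
    ∃ k ≤ L, (0 < k → g (k - 1) < x) ∧ (k < L → x < g k) := by
  classical
  have hex : ∃ k, k = L ∨ x < g k := ⟨L, Or.inl rfl⟩
  refine ⟨Nat.find hex, ?_, fun hk => ?_, fun hk => ?_⟩
  · exact Nat.find_min' hex (Or.inl rfl)
  · have hmin := Nat.find_min hex (show Nat.find hex - 1 < Nat.find hex by omega)
    have hkL := Nat.find_min' hex (Or.inl rfl)
    simp only [not_or, not_lt] at hmin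
    exact lt_of_le_of_ne hmin.2 (hx _ (by omega))
  · exact (Nat.find_spec hex).resolve_left hk.ne

lemma forall_lt_of_even_of_odd {L : ℕ} {P : ℕ → Prop} (heven : ∀ i, 2 * i < L → P (2 * i))
    (hodd : ∀ i, 2 * i + 1 < L → P (2 * i + 1)) : ∀ j < L, P j := by
  intro j hj
  rcases Nat.even_or_odd' j with ⟨i, rfl | rfl⟩
  exacts [heven i hj, hodd i hj]

lemma StrictMonoOn.eq_of_forall_exists_eq {a b : ℕ → ℕ} {n : ℕ} (ha : StrictMonoOn a (Set.Iio n))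
    (hb : StrictMonoOn b (Set.Iio n)) (h : ∀ j < n, ∃ i < n, a i = b j) :
    ∀ i < n, a i = b i := by
  classical
  set a' : Fin n → ℕ := fun i => a i
  set b' : Fin n → ℕ := fun i => b i
  have ha' : StrictMono a' := fun i j hij => ha i.2 j.2 hij
  have hb' : StrictMono b' := fun i j hij => hb i.2 j.2 hij
  have hsub : univ.image b' ⊆ univ.image a' := by
    intro x hx
    obtain ⟨j, -, rfl⟩ := mem_image.1 hx
    obtain ⟨i, hi, hij⟩ := h j j.2
    exact mem_image.2 ⟨⟨i, hi⟩, mem_univ _, hij⟩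
  have himage := eq_of_subset_of_card_le hsub (by
    rw [card_image_of_injective _ ha'.injective, card_image_of_injective _ hb'.injective])
  have hab : a' = b' := (ha'.range_inj hb').1 (by
    simpa [Set.image_univ] using congrArg (fun s : Finset ℕ => (s : Set ℕ)) himage.symm)
  exact fun i hi => congrFun hab ⟨i, hi⟩

lemma card_add_card_sdiff (A B : Finset ℕ) : A.card + (B \ A).card = B.card + (A \ B).card := by
  have h1 := card_sdiff_add_card_inter A B
  have h2 := card_sdiff_add_card_inter B A
  rw [inter_comm] at h2
  omega

lemma eq_union_of_sdiff_eq {X P Q Y : Finset ℕ} (hXQ : Disjoint X Q) (hD : Y \ (X ∪ Q) = P)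
    (hE : (X ∪ Q) \ Y = Q) : Y = X ∪ P := by
  ext x
  have h1 := Finset.ext_iff.1 hD x
  have h2 := Finset.ext_iff.1 hE x
  have h3 : x ∈ X → x ∉ Q := fun hx => disjoint_left.1 hXQ hx
  simp only [mem_sdiff, mem_union] at h1 h2 ⊢
  tauto

/-- An `IsAltSeq A B` of length `L` starting in `A \ B`, indexed by `ℕ` instead of `Fin L`. -/
structure IsZigzag (A B : Finset ℕ) (L : ℕ) (g : ℕ → ℕ) : Prop where
  lt_succ : ∀ j, j + 1 < L → g j < g (j + 1)
  mem : ∀ j < L, g j ∈ altSide A B j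

namespace IsZigzag

variable {A B : Finset ℕ} {L : ℕ} {g : ℕ → ℕ}

lemma lt (h : IsZigzag A B L g) {i j : ℕ} (hij : i < j) (hj : j < L) : g i < g j := by
  induction j, hij using Nat.le_induction with
  | base => exact h.lt_succ i hj
  | succ j _ ih => exact (ih (by omega)).trans (h.lt_succ j hj)

lemma injOn (h : IsZigzag A B L g) {i j : ℕ} (hi : i < L) (hj : j < L) (he : g i = g j) :
    i = j := by
  rcases lt_trichotomy i j with hij | hij | hij
  · exact absurd he (h.lt hij hj).ne
  · exact hij
  · exact absurd he (h.lt hij hi).ne'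

lemma mem_even (h : IsZigzag A B L g) {i : ℕ} (hi : 2 * i < L) : g (2 * i) ∈ A \ B :=
  (mem_altSide_of_even (by omega)).1 (h.mem _ hi)

lemma mem_odd (h : IsZigzag A B L g) {i : ℕ} (hi : 2 * i + 1 < L) : g (2 * i + 1) ∈ B \ A :=
  (mem_altSide_of_odd (by omega)).1 (h.mem _ hi)

lemma mono (h : IsZigzag A B L g) {L' : ℕ} (hL : L' ≤ L) : IsZigzag A B L' g :=
  ⟨fun j hj => h.lt_succ j (by omega), fun j hj => h.mem j (by omega)⟩

lemma isAltSeq (h : IsZigzag A B L g) : IsAltSeq A B (fun j : Fin L => g j) :=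
  ⟨fun _ j hij => h.lt hij j.isLt,
    Or.inl ⟨fun j hj => (mem_altSide_of_even hj).1 (h.mem j j.isLt),
      fun j hj => (mem_altSide_of_odd hj).1 (h.mem j j.isLt)⟩⟩

lemma mk' (hlt : ∀ j, j + 1 < L → g j < g (j + 1))
    (heven : ∀ i, 2 * i < L → g (2 * i) ∈ A \ B)
    (hodd : ∀ i, 2 * i + 1 < L → g (2 * i + 1) ∈ B \ A) : IsZigzag A B L g := by
  refine ⟨hlt, fun j hj => ?_⟩
  rcases Nat.even_or_odd' j with ⟨i, rfl | rfl⟩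
  · exact (mem_altSide_of_even (by omega)).2 (heven i hj)
  · exact (mem_altSide_of_odd (by omega)).2 (hodd i hj)

lemma of_mem {A' B' : Finset ℕ} (h : IsZigzag A B L g)
    (heven : ∀ i, 2 * i < L → g (2 * i) ∈ A \ B → g (2 * i) ∈ A' \ B')
    (hodd : ∀ i, 2 * i + 1 < L → g (2 * i + 1) ∈ B \ A → g (2 * i + 1) ∈ B' \ A') :
    IsZigzag A' B' L g :=
  mk' h.lt_succ (fun i hi => heven i hi (h.mem_even hi)) fun i hi => hodd i hi (h.mem_odd hi)

lemma erase_left (h : IsZigzag A B L g) {b : ℕ} (hb : ∀ i, 2 * i < L → g (2 * i) ≠ b) :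
    IsZigzag (A.erase b) B L g :=
  h.of_mem (fun i hi hm => by simp_all) fun i _ hm => by simp_all

lemma erase_right (h : IsZigzag A B L g) {b : ℕ} (hb : ∀ i, 2 * i + 1 < L → g (2 * i + 1) ≠ b) :
    IsZigzag A (B.erase b) L g :=
  h.of_mem (fun i _ hm => by simp_all) fun i hi hm => by simp_all

lemma insert_left (h : IsZigzag A B L g) {a : ℕ} (ha : ∀ i, 2 * i + 1 < L → g (2 * i + 1) ≠ a) :
    IsZigzag (insert a A) B L g :=
  h.of_mem (fun i _ hm => by simp_all) fun i hi hm => by simp_all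

lemma insert_right (h : IsZigzag A B L g) {a : ℕ} (ha : ∀ i, 2 * i < L → g (2 * i) ≠ a) :
    IsZigzag A (insert a B) L g :=
  h.of_mem (fun i hi hm => by simp_all) fun i _ hm => by simp_all

lemma update (h : IsZigzag A B L g) {k x : ℕ} (hk : k < L) (hx : x ∈ altSide A B k)
    (hlo : 0 < k → g (k - 1) < x) (hhi : k + 1 < L → x < g (k + 1)) :
    IsZigzag A B L (Function.update g k x) := by
  refine ⟨fun j hj => ?_, fun j hj => ?_⟩
  · rcases eq_or_ne j k with rfl | hjk
    · simpa using hhi hj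
    · rcases eq_or_ne (j + 1) k with rfl | hjk'
      · simpa [hjk] using hlo (by omega)
      · simpa [hjk, hjk'] using h.lt_succ j hj
  · rcases eq_or_ne j k with rfl | hjk
    · simpa using hx
    · simpa [hjk] using h.mem j hj

lemma update_apply_ne (h : IsZigzag A B L g) {m x j : ℕ} (hm : m < L) (hj : j < L)
    (hx : x ≠ g m) : Function.update g m x j ≠ g m := by
  rcases eq_or_ne j m with rfl | hjm
  · simpa using hx
  · rw [Function.update_of_ne hjm]
    exact fun he => hjm (h.injOn hj hm he)

lemma snoc (h : IsZigzag A B L g) {x : ℕ} (hx : x ∈ altSide A B L)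
    (hlt : 0 < L → g (L - 1) < x) : IsZigzag A B (L + 1) (Function.update g L x) := by
  refine ⟨fun j hj => ?_, fun j hj => ?_⟩
  · rcases eq_or_ne (j + 1) L with rfl | hjL
    · simpa using hlt (by omega)
    · simpa [show j ≠ L by omega, hjL] using h.lt_succ j (by omega)
  · rcases eq_or_ne j L with rfl | hjL
    · simpa using hx
    · simpa [hjL] using h.mem j (by omega)

lemma cons (h : IsZigzag A B L g) {x : ℕ} (hx : x ∈ B \ A) (hlt : 0 < L → x < g 0) :
    IsZigzag B A (L + 1) (seqCons x g) := by
  refine ⟨fun j hj => ?_, fun j hj => ?_⟩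
  · cases j with
    | zero => exact hlt (by omega)
    | succ j => exact h.lt_succ j (by omega)
  · cases j with
    | zero => exact (mem_altSide_of_even rfl).2 hx
    | succ j => simpa [seqCons, altSide_succ] using h.mem j (by omega)

lemma tail (h : IsZigzag A B (L + 1) g) : IsZigzag B A L (fun j => g (j + 1)) :=
  ⟨fun j hj => h.lt_succ (j + 1) (by omega),
    fun j hj => by simpa [altSide_succ] using h.mem (j + 1) (by omega)⟩

/-- A new term of the class of parity `π` takes the place of a neighbouring term of the same
parity, or extends the zigzag at one end. -/
lemma exchange (h : IsZigzag A B L g) {x π : ℕ} (hx : x ∈ altSide A B π)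
    (hne : ∀ j < L, g j ≠ x) :
    (∃ m < L, m % 2 = π % 2 ∧ IsZigzag A B L (Function.update g m x)) ∨
      (π % 2 = 1 ∧ IsZigzag B A (L + 1) (seqCons x g)) ∨
      (L % 2 = π % 2 ∧ IsZigzag A B (L + 1) (Function.update g L x)) := by
  obtain ⟨k, hkL, hlo, hhi⟩ := exists_slot hne
  by_cases hk : k < L ∧ k % 2 = π % 2
  · refine Or.inl ⟨k, hk.1, hk.2,
      h.update hk.1 ?_ hlo fun hk1 => (hhi hk.1).trans (h.lt_succ k hk1)⟩
    rwa [altSide_of_mod_eq A B hk.2]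
  by_cases hk' : 0 < k ∧ (k - 1) % 2 = π % 2
  · refine Or.inl ⟨k - 1, by omega, hk'.2, h.update (by omega) ?_ (fun _ => ?_) fun _ => ?_⟩
    · rwa [altSide_of_mod_eq A B hk'.2]
    · exact (h.lt (show k - 1 - 1 < k - 1 by omega) (by omega)).trans (hlo hk'.1)
    · simpa [show k - 1 + 1 = k by omega] using hhi (by omega)
  by_cases hπ : π % 2 = 1 ∧ k = 0
  · refine Or.inr (Or.inl ⟨hπ.1, h.cons ?_ fun hL => hπ.2 ▸ hhi (hπ.2 ▸ hL)⟩)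
    rwa [← mem_altSide_of_odd hπ.1]
  · have hkL' : k = L := by omega
    subst hkL'
    refine Or.inr (Or.inr ⟨by omega, h.snoc ?_ hlo⟩)
    rwa [altSide_of_mod_eq A B (show k % 2 = π % 2 by omega)]

lemma exists_update_of_between (h : IsZigzag A B L g) {m x : ℕ} (hm : m + 2 < L)
    (hlo : g m < x) (hhi : x < g (m + 2)) (hne : x ≠ g (m + 1)) (hx : x ∈ altSide A B m) :
    ∃ k, (k = m ∨ k = m + 2) ∧ IsZigzag A B L (Function.update g k x) := by
  rcases lt_or_gt_of_ne hne with hlt | hgt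
  · refine ⟨m, Or.inl rfl, h.update (by omega) hx (fun _ => ?_) fun _ => hlt⟩
    exact (h.lt (show m - 1 < m by omega) (by omega)).trans hlo
  · refine ⟨m + 2, Or.inr rfl, h.update hm ?_ (fun _ => hgt) fun hm3 => hhi.trans (h.lt_succ _ hm3)⟩
    rwa [altSide_of_mod_eq A B (show (m + 2) % 2 = m % 2 by omega)]

lemma card_even_le (h : IsZigzag A B L g) : (L + 1) / 2 ≤ (A \ B).card := by
  have hsub : (range ((L + 1) / 2)).image (fun i => g (2 * i)) ⊆ A \ B := by
    intro x hx
    obtain ⟨i, hi, rfl⟩ := mem_image.1 hx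
    exact h.mem_even (by have := mem_range.1 hi; omega)
  refine le_trans (le_of_eq ?_) (card_le_card hsub)
  rw [card_image_of_injOn fun i hi j hj hij => by
    simpa using h.injOn (by have := mem_range.1 hi; omega) (by have := mem_range.1 hj; omega) hij,
    card_range]

lemma card_odd_le (h : IsZigzag A B L g) : L / 2 ≤ (B \ A).card := by
  cases L with
  | zero => simp
  | succ L => exact h.tail.card_even_le

lemma even_eq (h : IsZigzag A B L g) {n : ℕ} (hn : (L + 1) / 2 = n) {b : ℕ → ℕ}
    (hb : StrictMonoOn b (Set.Iio n)) (hused : ∀ j < n, ∃ i, 2 * i < L ∧ g (2 * i) = b j) :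
    ∀ i < n, g (2 * i) = b i := by
  refine StrictMonoOn.eq_of_forall_exists_eq
    (fun i hi j hj hij => h.lt (by omega) (by rw [Set.mem_Iio] at hj; omega)) hb
    fun j hj => ?_
  obtain ⟨i, hi, he⟩ := hused j hj
  exact ⟨i, by omega, he⟩

lemma odd_eq (h : IsZigzag A B L g) {n : ℕ} (hn : L / 2 = n) {b : ℕ → ℕ}
    (hb : StrictMonoOn b (Set.Iio n)) (hused : ∀ j < n, ∃ i, 2 * i + 1 < L ∧ g (2 * i + 1) = b j) :
    ∀ i < n, g (2 * i + 1) = b i := by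
  cases L with
  | zero => exact fun i hi => by omega
  | succ L =>
    refine h.tail.even_eq (by omega) hb fun j hj => ?_
    obtain ⟨i, hi, he⟩ := hused j hj
    exact ⟨i, by omega, he⟩

lemma card_odd_lt (h : IsZigzag A B L g) {x : ℕ} (hx : x ∈ B \ A)
    (hne : ∀ k, 2 * k + 1 < L → g (2 * k + 1) ≠ x) : L / 2 < (B \ A).card := by
  have hsub : insert x ((range (L / 2)).image fun i => g (2 * i + 1)) ⊆ B \ A := by
    refine insert_subset hx fun y hy => ?_
    obtain ⟨i, hi, rfl⟩ := mem_image.1 hy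
    exact h.mem_odd (by have := mem_range.1 hi; omega)
  refine lt_of_lt_of_le ?_ (card_le_card hsub)
  rw [card_insert_of_notMem, card_image_of_injOn fun i hi j hj hij => by
    simpa using h.injOn (by have := mem_range.1 hi; omega) (by have := mem_range.1 hj; omega) hij,
    card_range]
  · omega
  · simp only [mem_image, mem_range, not_exists, not_and]
    exact fun k hk => hne k (by omega)

end IsZigzag

lemma IsAltSeq.length_le_card {A B : Finset ℕ} {m : ℕ} {f : Fin m → ℕ} (h : IsAltSeq A B f) :
    m ≤ (A ∪ B).card := by
  have hmem : ∀ j, f j ∈ A ∪ B := fun j => by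
    rcases h.2 with ⟨h0, h1⟩ | ⟨h0, h1⟩ <;> rcases Nat.mod_two_eq_zero_or_one j with hj | hj
    all_goals first
      | exact mem_union_left _ (mem_sdiff.1 (h0 j hj)).1
      | exact mem_union_right _ (mem_sdiff.1 (h0 j hj)).1
      | exact mem_union_left _ (mem_sdiff.1 (h1 j hj)).1
      | exact mem_union_right _ (mem_sdiff.1 (h1 j hj)).1
  simpa using card_le_card_of_injOn f (s := univ) (fun j _ => hmem j) h.1.injective.injOn

lemma bddAbove_altLen_set (A B : Finset ℕ) :
    BddAbove {m : ℕ | ∃ f : Fin m → ℕ, IsAltSeq A B f} :=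
  ⟨(A ∪ B).card, fun _ ⟨_, hf⟩ => hf.length_le_card⟩

lemma IsZigzag.le_altLen {A B : Finset ℕ} {L : ℕ} {g : ℕ → ℕ} (h : IsZigzag A B L g) :
    L ≤ altLen A B :=
  le_csSup (bddAbove_altLen_set A B) ⟨_, h.isAltSeq⟩

lemma isAltSeq_comm {A B : Finset ℕ} {m : ℕ} {f : Fin m → ℕ} :
    IsAltSeq A B f ↔ IsAltSeq B A f :=
  and_congr_right' or_comm

lemma altLen_comm (A B : Finset ℕ) : altLen A B = altLen B A := by
  simp only [altLen, isAltSeq_comm]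

lemma exists_isZigzag_of_strictMono {A B : Finset ℕ} {m : ℕ} {f : Fin m → ℕ} (hf : StrictMono f)
    (h0 : ∀ j : Fin m, (j : ℕ) % 2 = 0 → f j ∈ A \ B)
    (h1 : ∀ j : Fin m, (j : ℕ) % 2 = 1 → f j ∈ B \ A) : ∃ g, IsZigzag A B m g := by
  refine ⟨fun j => if hj : j < m then f ⟨j, hj⟩ else 0, fun j hj => ?_, fun j hj => ?_⟩
  · simp only [dif_pos hj, dif_pos (by omega : j < m)]
    exact hf (Fin.mk_lt_mk.2 (by omega))
  · simp only [dif_pos hj, altSide]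
    split_ifs with hpar
    exacts [h0 ⟨j, hj⟩ hpar, h1 ⟨j, hj⟩ (Nat.mod_two_ne_zero.1 hpar)]

lemma exists_isZigzag_altLen (A B : Finset ℕ) :
    ∃ g, IsZigzag A B (altLen A B) g ∨ IsZigzag B A (altLen A B) g := by
  have hempty : IsZigzag A B 0 id := ⟨fun _ h => by omega, fun _ h => by omega⟩
  obtain ⟨f, hmono, ⟨h0, h1⟩ | ⟨h0, h1⟩⟩ : ∃ f : Fin (altLen A B) → ℕ, IsAltSeq A B f :=
    Nat.sSup_mem (s := {m : ℕ | ∃ f : Fin m → ℕ, IsAltSeq A B f}) ⟨0, _, hempty.isAltSeq⟩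
      (bddAbove_altLen_set A B)
  · obtain ⟨g, hg⟩ := exists_isZigzag_of_strictMono hmono h0 h1
    exact ⟨g, Or.inl hg⟩
  · obtain ⟨g, hg⟩ := exists_isZigzag_of_strictMono hmono h0 h1
    exact ⟨g, Or.inr hg⟩

lemma le_altLen_iff {A B : Finset ℕ} {L : ℕ} :
    L ≤ altLen A B ↔ ∃ g, IsZigzag A B L g ∨ IsZigzag B A L g := by
  refine ⟨fun hL => ?_, ?_⟩
  · obtain ⟨g, hg | hg⟩ := exists_isZigzag_altLen A B
    exacts [⟨g, Or.inl (hg.mono hL)⟩, ⟨g, Or.inr (hg.mono hL)⟩]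
  · rintro ⟨g, hg | hg⟩
    exacts [hg.le_altLen, altLen_comm A B ▸ hg.le_altLen]

namespace IsZigzag

variable {A B : Finset ℕ} {L : ℕ} {g : ℕ → ℕ}

lemma exchange_of_altLen_le (h : IsZigzag A B L g) (hmax : altLen A B ≤ L) {x π : ℕ}
    (hx : x ∈ altSide A B π) (hne : ∀ j < L, g j ≠ x) :
    ∃ m < L, m % 2 = π % 2 ∧ IsZigzag A B L (Function.update g m x) := by
  rcases h.exchange hx hne with hm | ⟨-, hg⟩ | ⟨-, hg⟩
  · exact hm
  · have := hg.le_altLen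
    rw [← altLen_comm] at this
    omega
  · have := hg.le_altLen
    omega

lemma surrounds {t : ℕ} (h : IsZigzag A B (2 * t + 1) g) (hmax : altLen A B ≤ 2 * t + 1) :
    Surrounds A B := by
  have hbetween : ∀ x ∈ B \ A, g 0 < x ∧ x < g (2 * t) := by
    intro x hx
    by_cases hne : ∀ j < 2 * t + 1, g j ≠ x
    · obtain ⟨m, hm, hmod, hg⟩ := h.exchange_of_altLen_le hmax (π := 1)
        ((mem_altSide_of_odd rfl).2 hx) hne
      have h0 := hg.lt (show 0 < m by omega) hm
      have h1 := hg.lt (show m < 2 * t by omega) (by omega)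
      simp_all [show (0 : ℕ) ≠ m by omega, show 2 * t ≠ m by omega]
    · push Not at hne
      obtain ⟨j, hj, rfl⟩ := hne
      have hodd : j % 2 = 1 := by
        by_contra heven
        have := (mem_altSide_of_even (by omega)).1 (h.mem j hj)
        simp_all
      exact ⟨h.lt (by omega) hj, h.lt (by omega) (by omega)⟩
  have h0 := h.mem_even (i := 0) (by omega)
  have ht := h.mem_even (i := t) (by omega)
  exact ⟨(min_le (by simpa using h0)).trans_lt ((Finset.lt_inf_iff (WithTop.coe_lt_top _)).2
      fun x hx => WithTop.coe_lt_coe.2 (hbetween x hx).1),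
    ((Finset.sup_lt_iff (WithBot.bot_lt_coe _)).2
      fun x hx => WithBot.coe_lt_coe.2 (hbetween x hx).2).trans_le (le_max (by simpa using ht))⟩

end IsZigzag

lemma weaklySep_comm {r : ℕ} {A B : Finset ℕ} : WeaklySep r A B ↔ WeaklySep r B A := by
  simp only [WeaklySep, altLen_comm A B, or_comm]

lemma Surrounds.not_surrounds {A B : Finset ℕ} (h : Surrounds A B) : ¬ Surrounds B A :=
  fun h' => lt_asymm h.1 h'.1

inductive HasObstruction (t : ℕ) (A B : Finset ℕ) : Prop
  | long {g : ℕ → ℕ} : IsZigzag A B (2 * t + 2) g → HasObstruction t A B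
  | long_swap {g : ℕ → ℕ} : IsZigzag B A (2 * t + 2) g → HasObstruction t A B
  | odd {g : ℕ → ℕ} : IsZigzag A B (2 * t + 1) g → B.card < A.card → HasObstruction t A B
  | odd_swap {g : ℕ → ℕ} : IsZigzag B A (2 * t + 1) g → A.card < B.card → HasObstruction t A B

lemma not_weaklySep_of_isZigzag {r t : ℕ} (hr : r + 2 = 2 * t + 1) {A B : Finset ℕ} {g : ℕ → ℕ}
    (h : IsZigzag A B (2 * t + 1) g) (hcard : B.card < A.card) : ¬ WeaklySep r A B := by
  rintro ⟨hle, hsep⟩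
  have hsurr := h.surrounds (by omega)
  rcases hsep (le_antisymm hle (hr ▸ h.le_altLen)) with ⟨-, hc⟩ | ⟨hs, -⟩
  · omega
  · exact hsurr.not_surrounds hs

lemma not_weaklySep_iff {r t : ℕ} (hr : r + 2 = 2 * t + 1) {A B : Finset ℕ} :
    ¬ WeaklySep r A B ↔ HasObstruction t A B := by
  constructor
  · intro hsep
    by_cases hlong : 2 * t + 2 ≤ altLen A B
    · obtain ⟨g, hg | hg⟩ := le_altLen_iff.1 hlong
      exacts [.long hg, .long_swap hg]
    have hlen : altLen A B = 2 * t + 1 := by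
      by_contra hne
      exact hsep ⟨by omega, fun h => absurd h (by omega)⟩
    obtain ⟨g, hg | hg⟩ := le_altLen_iff.1 hlen.ge
    · refine .odd hg (not_le.1 fun hcard => hsep ⟨by omega, fun _ => ?_⟩)
      exact Or.inl ⟨hg.surrounds hlen.le, hcard⟩
    · refine .odd_swap hg (not_le.1 fun hcard => hsep ⟨by omega, fun _ => ?_⟩)
      exact Or.inr ⟨hg.surrounds (altLen_comm A B ▸ hlen.le), hcard⟩
  · rintro (hg | hg | ⟨hg, hcard⟩ | ⟨hg, hcard⟩)
    · exact fun hsep => by have := hg.le_altLen; have := hsep.1; omega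
    · exact fun hsep => by have := hg.le_altLen; have := hsep.1; rw [altLen_comm] at this; omega
    · exact not_weaklySep_of_isZigzag hr hg hcard
    · exact weaklySep_comm.not.2 (not_weaklySep_of_isZigzag hr hg hcard)

/-- The members of `N↓(P, Q)`. -/
def IsDownNeighbor (P Q S : Finset ℕ) : Prop :=
  (∃ b ∈ Q, S = Q.erase b) ∨ ∃ a ∈ P, ∃ b ∈ Q, S = insert a (Q.erase b)

/-- `q 0 < p 0 < q 1 < ⋯ < p (t - 1) < q t`; the paper's `p_i` is `p (i - 1)`. -/
structure Interlacing where
  t : ℕ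
  q : ℕ → ℕ
  p : ℕ → ℕ
  q_lt_p : ∀ i < t, q i < p i
  p_lt_q : ∀ i < t, p i < q (i + 1)

namespace Interlacing

variable (C : Interlacing)

def Q : Finset ℕ := (range (C.t + 1)).image C.q

def P : Finset ℕ := (range C.t).image C.p

def word (m : ℕ) : ℕ := if m % 2 = 0 then C.q (m / 2) else C.p (m / 2)

variable {C} {X Y : Finset ℕ} {g : ℕ → ℕ}

lemma word_even (i : ℕ) : C.word (2 * i) = C.q i := by simp [word]

lemma word_odd (i : ℕ) : C.word (2 * i + 1) = C.p i := by
  simp [word, show (2 * i + 1) / 2 = i by omega]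

lemma word_lt_succ {m : ℕ} (hm : m < 2 * C.t) : C.word m < C.word (m + 1) := by
  rcases Nat.even_or_odd' m with ⟨i, rfl | rfl⟩
  · rw [word_even, word_odd]
    exact C.q_lt_p i (by omega)
  · rw [word_odd, show 2 * i + 1 + 1 = 2 * (i + 1) by ring, word_even]
    exact C.p_lt_q i (by omega)

lemma word_lt {i j : ℕ} (hij : i < j) (hj : j ≤ 2 * C.t) : C.word i < C.word j := by
  induction j, hij using Nat.le_induction with
  | base => exact word_lt_succ (by omega)
  | succ j _ ih => exact (ih (by omega)).trans (word_lt_succ (by omega))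

lemma q_lt_q {i j : ℕ} (hij : i < j) (hj : j ≤ C.t) : C.q i < C.q j := by
  simpa [word_even] using word_lt (C := C) (show 2 * i < 2 * j by omega) (by omega)

lemma p_lt_p {i j : ℕ} (hij : i < j) (hj : j < C.t) : C.p i < C.p j := by
  simpa [word_odd] using word_lt (C := C) (show 2 * i + 1 < 2 * j + 1 by omega) (by omega)

lemma q_injOn {i j : ℕ} (hi : i ≤ C.t) (hj : j ≤ C.t) (h : C.q i = C.q j) : i = j := by
  rcases lt_trichotomy i j with hij | rfl | hij
  · exact absurd h (q_lt_q hij hj).ne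
  · rfl
  · exact absurd h (q_lt_q hij hi).ne'

lemma p_injOn {i j : ℕ} (hi : i < C.t) (hj : j < C.t) (h : C.p i = C.p j) : i = j := by
  rcases lt_trichotomy i j with hij | rfl | hij
  · exact absurd h (p_lt_p hij hj).ne
  · rfl
  · exact absurd h (p_lt_p hij hi).ne'

lemma p_ne_q {i j : ℕ} (hi : i < C.t) (hj : j ≤ C.t) : C.p i ≠ C.q j := by
  rw [← word_odd, ← word_even]
  rcases lt_or_gt_of_ne (show 2 * i + 1 ≠ 2 * j by omega) with h | h
  · exact (word_lt h (by omega)).ne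
  · exact (word_lt h (by omega)).ne'

lemma mem_Q {x : ℕ} : x ∈ C.Q ↔ ∃ j ≤ C.t, C.q j = x := by
  simp [Q]

lemma mem_P {x : ℕ} : x ∈ C.P ↔ ∃ i < C.t, C.p i = x := by
  simp [P]

lemma q_mem_Q {j : ℕ} (hj : j ≤ C.t) : C.q j ∈ C.Q := mem_Q.2 ⟨j, hj, rfl⟩

lemma p_mem_P {i : ℕ} (hi : i < C.t) : C.p i ∈ C.P := mem_P.2 ⟨i, hi, rfl⟩

lemma p_notMem_Q {i : ℕ} (hi : i < C.t) : C.p i ∉ C.Q := by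
  rw [mem_Q]
  rintro ⟨j, hj, h⟩
  exact p_ne_q hi hj h.symm

lemma card_Q : C.Q.card = C.t + 1 := by
  rw [Q, card_image_of_injOn fun i hi j hj h => q_injOn (by simp_all) (by simp_all) h,
    card_range]

lemma card_P : C.P.card = C.t := by
  rw [P, card_image_of_injOn fun i hi j hj h => p_injOn (by simp_all) (by simp_all) h, card_range]

lemma q_strictMonoOn : StrictMonoOn C.q (Set.Iio (C.t + 1)) :=
  fun _ _ _ hj hij => q_lt_q hij (by rw [Set.mem_Iio] at hj; omega)

lemma p_strictMonoOn : StrictMonoOn C.p (Set.Iio C.t) :=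
  fun _ _ _ hj hij => p_lt_p hij hj

lemma exists_q_notMem (s : Finset ℕ) (hs : s.card ≤ C.t) : ∃ j ≤ C.t, C.q j ∉ s := by
  obtain ⟨x, hx, hxs⟩ := exists_mem_notMem_of_card_lt_card (s := s) (t := C.Q) (by
    rw [card_Q]; omega)
  obtain ⟨j, hj, rfl⟩ := mem_Q.1 hx
  exact ⟨j, hj, hxs⟩

lemma exists_p_notMem (s : Finset ℕ) (hs : s.card < C.t) : ∃ i < C.t, C.p i ∉ s := by
  obtain ⟨x, hx, hxs⟩ := exists_mem_notMem_of_card_lt_card (s := s) (t := C.P) (by rwa [card_P])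
  obtain ⟨i, hi, rfl⟩ := mem_P.1 hx
  exact ⟨i, hi, hxs⟩

lemma q_notMem_X (hX : Disjoint X (C.P ∪ C.Q)) {j : ℕ} (hj : j ≤ C.t) : C.q j ∉ X :=
  disjoint_right.1 hX (mem_union_right _ (q_mem_Q hj))

lemma p_notMem_X (hX : Disjoint X (C.P ∪ C.Q)) {i : ℕ} (hi : i < C.t) : C.p i ∉ X :=
  disjoint_right.1 hX (mem_union_left _ (p_mem_P hi))

lemma q_mem_B {j : ℕ} (hj : j ≤ C.t) : C.q j ∈ X ∪ C.Q := mem_union_right _ (q_mem_Q hj)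

lemma p_notMem_B (hX : Disjoint X (C.P ∪ C.Q)) {i : ℕ} (hi : i < C.t) : C.p i ∉ X ∪ C.Q := by
  simp [p_notMem_X hX hi, p_notMem_Q hi]

lemma union_erase_q (hX : Disjoint X (C.P ∪ C.Q)) {j : ℕ} (hj : j ≤ C.t) :
    X ∪ C.Q.erase (C.q j) = (X ∪ C.Q).erase (C.q j) := by
  rw [erase_union_distrib, erase_eq_of_notMem (q_notMem_X hX hj)]

lemma card_erase_q {j : ℕ} (hj : j ≤ C.t) :
    ((X ∪ C.Q).erase (C.q j)).card + 1 = (X ∪ C.Q).card :=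
  card_erase_add_one (q_mem_B hj)

lemma card_insert_p_erase_q (hX : Disjoint X (C.P ∪ C.Q)) {i j : ℕ} (hi : i < C.t)
    (hj : j ≤ C.t) : (insert (C.p i) ((X ∪ C.Q).erase (C.q j))).card = (X ∪ C.Q).card := by
  rw [card_insert_of_notMem fun h => p_notMem_B hX hi (mem_of_mem_erase h), card_erase_q hj]

variable (C) in
def HasBadDownNeighbor (X Y : Finset ℕ) : Prop :=
  ∃ S, IsDownNeighbor C.P C.Q S ∧ HasObstruction C.t Y (X ∪ S)

lemma hasBadDownNeighbor_erase (hX : Disjoint X (C.P ∪ C.Q)) {j : ℕ} (hj : j ≤ C.t)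
    (h : HasObstruction C.t Y ((X ∪ C.Q).erase (C.q j))) : C.HasBadDownNeighbor X Y :=
  ⟨_, Or.inl ⟨_, q_mem_Q hj, rfl⟩, (union_erase_q hX hj).symm ▸ h⟩

lemma hasBadDownNeighbor_swap (hX : Disjoint X (C.P ∪ C.Q)) {i j : ℕ} (hi : i < C.t)
    (hj : j ≤ C.t) (h : HasObstruction C.t Y (insert (C.p i) ((X ∪ C.Q).erase (C.q j)))) :
    C.HasBadDownNeighbor X Y :=
  ⟨_, Or.inr ⟨_, p_mem_P hi, _, q_mem_Q hj, rfl⟩, by rwa [union_insert, union_erase_q hX hj]⟩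

lemma hasBadDownNeighbor_of_long_of_card_lt (hX : Disjoint X (C.P ∪ C.Q))
    (hg : IsZigzag Y (X ∪ C.Q) (2 * C.t + 2) g) (hq : ∀ i ≤ C.t, g (2 * i + 1) = C.q i)
    (hcard : Y.card < (X ∪ C.Q).card) : C.HasBadDownNeighbor X Y := by
  obtain ⟨ξ, hξ, hξQ⟩ : ∃ ξ ∈ (X ∪ C.Q) \ Y, ξ ∉ C.Q := by
    refine exists_mem_notMem_of_card_lt_card ?_
    have := hg.card_even_le
    have := card_add_card_sdiff Y (X ∪ C.Q)
    rw [card_Q]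
    omega
  have hne : ∀ j < 2 * C.t + 2, g j ≠ ξ := forall_lt_of_even_of_odd
    (fun i hi he => (mem_sdiff.1 hξ).2 (he ▸ (mem_sdiff.1 (hg.mem_even hi)).1))
    (fun i hi he => hξQ (he ▸ hq i (by omega) ▸ q_mem_Q (by omega)))
  rcases hg.exchange (π := 1) ((mem_altSide_of_odd rfl).2 hξ) hne with
    ⟨m, hm, hmod, hg'⟩ | ⟨-, hg'⟩ | ⟨hmod, -⟩
  · obtain ⟨k, rfl⟩ : ∃ k, m = 2 * k + 1 := ⟨m / 2, by omega⟩
    refine hasBadDownNeighbor_erase (C := C) hX (j := k) (by omega) ?_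
    rw [← hq k (by omega)]
    exact .long (hg'.erase_right fun i hi => hg.update_apply_ne hm hi (hne _ hm).symm)
  · refine hasBadDownNeighbor_erase hX le_rfl (.long_swap ((hg'.mono (by omega)).erase_left ?_))
    rintro (_ | i) hi
    · exact fun (h : ξ = C.q C.t) => hξQ (h ▸ q_mem_Q le_rfl)
    · rw [show 2 * (i + 1) = 2 * i + 1 + 1 by ring, seqCons, hq i (by omega)]
      exact fun h => by have := q_injOn (by omega) le_rfl h; omega
  · omega

lemma hasBadDownNeighbor_of_long_of_forall_p_mem (hX : Disjoint X (C.P ∪ C.Q))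
    (hg : IsZigzag Y (X ∪ C.Q) (2 * C.t + 2) g) (hq : ∀ i ≤ C.t, g (2 * i + 1) = C.q i)
    (hcard : (X ∪ C.Q).card ≤ Y.card) (hp : ∀ i < C.t, C.p i ∈ Y) :
    C.HasBadDownNeighbor X Y := by
  have hword : IsZigzag ((X ∪ C.Q).erase (C.q C.t)) Y (2 * C.t) C.word := by
    refine .mk' (fun m hm => word_lt_succ (by omega)) (fun i hi => ?_) fun i hi => ?_
    · have := hg.mem_odd (i := i) (by omega)
      rw [hq i (by omega)] at this
      rw [word_even]
      simp_all [(q_lt_q (C := C) (show i < C.t by omega) le_rfl).ne]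
    · rw [word_odd]
      simp [hp i (by omega), p_notMem_B hX (show i < C.t by omega)]
  have h0 := hg.mem_even (i := 0) (by omega)
  have h1 := hg.lt_succ 0 (by omega)
  refine hasBadDownNeighbor_erase hX le_rfl (.odd (hword.cons (x := g 0) ?_ fun _ => ?_) ?_)
  · simp_all
  · have hq0 : g 1 = C.q 0 := by simpa using hq 0 (by omega)
    rw [show C.word 0 = C.q 0 from word_even 0, ← hq0]
    exact h1
  · have := card_erase_q (X := X) (C := C) le_rfl
    omega

lemma hasBadDownNeighbor_of_long_of_p_notMem (hX : Disjoint X (C.P ∪ C.Q))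
    (hg : IsZigzag Y (X ∪ C.Q) (2 * C.t + 2) g) (hq : ∀ i ≤ C.t, g (2 * i + 1) = C.q i)
    {i : ℕ} (hi : i < C.t) (hp : C.p i ∉ Y) : C.HasBadDownNeighbor X Y := by
  have hins := hg.insert_right (a := C.p i) fun k hk he =>
    hp (he ▸ (mem_sdiff.1 (hg.mem_even hk)).1)
  obtain ⟨m, hm, hg'⟩ := hins.exists_update_of_between (m := 2 * i + 1) (x := C.p i) (by omega)
    (by rw [hq i hi.le]; exact C.q_lt_p i hi)
    (by rw [show 2 * i + 1 + 2 = 2 * (i + 1) + 1 by ring, hq (i + 1) hi]; exact C.p_lt_q i hi)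
    (fun he => hp (he ▸ (mem_sdiff.1 (hg.mem_even (i := i + 1) (by omega))).1))
    ((mem_altSide_of_odd (by omega)).2 (by simp [hp]))
  obtain ⟨k, rfl, hk⟩ : ∃ k, m = 2 * k + 1 ∧ k ≤ C.t := ⟨m / 2, by omega, by omega⟩
  refine hasBadDownNeighbor_swap hX hi hk (.long (g := Function.update g (2 * k + 1) (C.p i)) ?_)
  rw [← erase_insert_of_ne (p_ne_q hi hk), ← hq k hk]
  exact hg'.erase_right fun j hj => hins.update_apply_ne (by omega) hj
    (by rw [hq k hk]; exact p_ne_q hi hk)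

lemma hasBadDownNeighbor_of_long (hX : Disjoint X (C.P ∪ C.Q))
    (hg : IsZigzag Y (X ∪ C.Q) (2 * C.t + 2) g) : C.HasBadDownNeighbor X Y := by
  by_cases hfree : ∃ j ≤ C.t, ∀ i, 2 * i + 1 < 2 * C.t + 2 → g (2 * i + 1) ≠ C.q j
  · obtain ⟨j, hj, hne⟩ := hfree
    exact hasBadDownNeighbor_erase hX hj (.long (hg.erase_right hne))
  push Not at hfree
  have hq : ∀ i ≤ C.t, g (2 * i + 1) = C.q i := fun i hi =>
    hg.odd_eq (by omega) q_strictMonoOn (fun j hj => hfree j (by omega)) i (by omega)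
  rcases lt_or_ge Y.card (X ∪ C.Q).card with hcard | hcard
  · exact hasBadDownNeighbor_of_long_of_card_lt hX hg hq hcard
  by_cases hp : ∀ i < C.t, C.p i ∈ Y
  · exact hasBadDownNeighbor_of_long_of_forall_p_mem hX hg hq hcard hp
  · push Not at hp
    obtain ⟨i, hi, hpi⟩ := hp
    exact hasBadDownNeighbor_of_long_of_p_notMem hX hg hq hi hpi

lemma hasBadDownNeighbor_of_long_swap_of_card_lt (hX : Disjoint X (C.P ∪ C.Q))
    (hg : IsZigzag (X ∪ C.Q) Y (2 * C.t + 2) g) (hq : ∀ i ≤ C.t, g (2 * i) = C.q i)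
    (hcard : Y.card < (X ∪ C.Q).card) : C.HasBadDownNeighbor X Y := by
  obtain ⟨ξ, hξ, hξQ⟩ : ∃ ξ ∈ (X ∪ C.Q) \ Y, ξ ∉ C.Q := by
    refine exists_mem_notMem_of_card_lt_card ?_
    have := hg.card_odd_le
    have := card_add_card_sdiff Y (X ∪ C.Q)
    rw [card_Q]
    omega
  have hne : ∀ j < 2 * C.t + 2, g j ≠ ξ := forall_lt_of_even_of_odd
    (fun i hi he => hξQ (he ▸ hq i (by omega) ▸ q_mem_Q (by omega)))
    (fun i hi he => (mem_sdiff.1 hξ).2 (he ▸ (mem_sdiff.1 (hg.mem_odd hi)).1))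
  rcases hg.exchange (π := 0) ((mem_altSide_of_even rfl).2 hξ) hne with
    ⟨m, hm, hmod, hg'⟩ | ⟨hmod, -⟩ | ⟨-, hg'⟩
  · obtain ⟨k, rfl⟩ : ∃ k, m = 2 * k := ⟨m / 2, by omega⟩
    refine hasBadDownNeighbor_erase (C := C) hX (j := k) (by omega) ?_
    rw [← hq k (by omega)]
    exact .long_swap (hg'.erase_left fun i hi => hg.update_apply_ne hm hi (hne _ hm).symm)
  · omega
  · refine hasBadDownNeighbor_erase hX (j := 0) (Nat.zero_le _)
      (.long (hg'.tail.erase_right fun i hi => ?_))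
    rcases eq_or_ne (2 * i + 1 + 1) (2 * C.t + 2) with h | h
    · rw [h, Function.update_self]
      exact fun he => hξQ (he ▸ q_mem_Q (Nat.zero_le _))
    · rw [Function.update_of_ne h, show 2 * i + 1 + 1 = 2 * (i + 1) by ring, hq (i + 1) (by omega)]
      exact fun he => by have := q_injOn (by omega) (Nat.zero_le _) he; omega

lemma exists_isZigzag_swap_of_p_notMem {L : ℕ} (hL : 2 * C.t + 1 ≤ L) (hL' : L ≤ 2 * C.t + 2)
    (hg : IsZigzag (X ∪ C.Q) Y L g) (hq : ∀ i ≤ C.t, g (2 * i) = C.q i) {i : ℕ} (hi : i < C.t)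
    (hp : C.p i ∉ Y) :
    ∃ k ≤ C.t, ∃ g', IsZigzag (insert (C.p i) ((X ∪ C.Q).erase (C.q k))) Y L g' := by
  have hins := hg.insert_left (a := C.p i) fun k hk he =>
    hp (he ▸ (mem_sdiff.1 (hg.mem_odd hk)).1)
  obtain ⟨m, hm, hg'⟩ := hins.exists_update_of_between (m := 2 * i) (x := C.p i) (by omega)
    (by rw [hq i hi.le]; exact C.q_lt_p i hi)
    (by rw [show 2 * i + 2 = 2 * (i + 1) by ring, hq (i + 1) hi]; exact C.p_lt_q i hi)
    (fun he => hp (he ▸ (mem_sdiff.1 (hg.mem_odd (i := i) (by omega))).1))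
    ((mem_altSide_of_even (by omega)).2 (by simp [hp]))
  obtain ⟨k, rfl, hk⟩ : ∃ k, m = 2 * k ∧ k ≤ C.t := ⟨m / 2, by omega, by omega⟩
  refine ⟨k, hk, Function.update g (2 * k) (C.p i), ?_⟩
  rw [← erase_insert_of_ne (p_ne_q hi hk), ← hq k hk]
  exact hg'.erase_left fun j hj => hins.update_apply_ne (by omega) hj
    (by rw [hq k hk]; exact p_ne_q hi hk)

lemma hasBadDownNeighbor_of_long_swap_of_forall_p_mem (hX : Disjoint X (C.P ∪ C.Q))
    (hg : IsZigzag (X ∪ C.Q) Y (2 * C.t + 2) g) (hq : ∀ i ≤ C.t, g (2 * i) = C.q i)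
    (hcard : (X ∪ C.Q).card ≤ Y.card) (hp : ∀ i < C.t, C.p i ∈ Y) :
    C.HasBadDownNeighbor X Y := by
  have hword : IsZigzag Y ((X ∪ C.Q).erase (C.q 0)) (2 * C.t) (fun m => C.word (m + 1)) := by
    refine .mk' (fun m hm => word_lt_succ (by omega)) (fun i hi => ?_) fun i hi => ?_
    · rw [word_odd]
      simp [hp i (by omega), p_notMem_B hX (show i < C.t by omega)]
    · have := hg.mem_even (i := i + 1) (by omega)
      rw [hq (i + 1) (by omega)] at this
      rw [show 2 * i + 1 + 1 = 2 * (i + 1) by ring, word_even]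
      simp_all [(q_lt_q (C := C) (show 0 < i + 1 by omega) (by omega)).ne']
  have hlast := hg.mem_odd (i := C.t) (by omega)
  refine hasBadDownNeighbor_erase hX (Nat.zero_le _)
    (.odd (hword.snoc (x := g (2 * C.t + 1)) ?_ fun _ => ?_) ?_)
  · rw [mem_altSide_of_even (by omega)]
    simp_all
  · rw [show 2 * C.t - 1 + 1 = 2 * C.t by omega, word_even, ← hq C.t le_rfl]
    exact hg.lt_succ _ (by omega)
  · have := card_erase_q (X := X) (C := C) (Nat.zero_le _)
    omega

lemma hasBadDownNeighbor_of_long_swap (hX : Disjoint X (C.P ∪ C.Q))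
    (hg : IsZigzag (X ∪ C.Q) Y (2 * C.t + 2) g) : C.HasBadDownNeighbor X Y := by
  by_cases hfree : ∃ j ≤ C.t, ∀ i, 2 * i < 2 * C.t + 2 → g (2 * i) ≠ C.q j
  · obtain ⟨j, hj, hne⟩ := hfree
    exact hasBadDownNeighbor_erase hX hj (.long_swap (hg.erase_left hne))
  push Not at hfree
  have hq : ∀ i ≤ C.t, g (2 * i) = C.q i := fun i hi =>
    hg.even_eq (by omega) q_strictMonoOn (fun j hj => hfree j (by omega)) i (by omega)
  rcases lt_or_ge Y.card (X ∪ C.Q).card with hcard | hcard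
  · exact hasBadDownNeighbor_of_long_swap_of_card_lt hX hg hq hcard
  by_cases hp : ∀ i < C.t, C.p i ∈ Y
  · exact hasBadDownNeighbor_of_long_swap_of_forall_p_mem hX hg hq hcard hp
  · push Not at hp
    obtain ⟨i, hi, hpi⟩ := hp
    obtain ⟨k, hk, g', hg'⟩ := exists_isZigzag_swap_of_p_notMem (by omega) le_rfl hg hq hi hpi
    exact hasBadDownNeighbor_swap hX hi hk (.long_swap hg')

lemma hasBadDownNeighbor_of_odd (hX : Disjoint X (C.P ∪ C.Q))
    (hg : IsZigzag Y (X ∪ C.Q) (2 * C.t + 1) g) (hcard : (X ∪ C.Q).card < Y.card) :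
    C.HasBadDownNeighbor X Y := by
  obtain ⟨j, hj, hfree⟩ := exists_q_notMem (C := C) ((range C.t).image fun i => g (2 * i + 1))
    (card_image_le.trans (by simp))
  refine hasBadDownNeighbor_erase hX hj (.odd (hg.erase_right fun i hi he => hfree ?_) ?_)
  · exact mem_image.2 ⟨i, mem_range.2 (by omega), he⟩
  · have := card_erase_q (X := X) (C := C) hj
    omega

lemma hasBadDownNeighbor_of_odd_swap_of_avoiding (hX : Disjoint X (C.P ∪ C.Q))
    (hg : IsZigzag (X ∪ C.Q) Y (2 * C.t + 1) g) (hcard : Y.card < (X ∪ C.Q).card)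
    {i j : ℕ} (hi : i < C.t) (hj : j ≤ C.t)
    (hp : ∀ k, 2 * k + 1 < 2 * C.t + 1 → g (2 * k + 1) ≠ C.p i)
    (hq : ∀ k, 2 * k < 2 * C.t + 1 → g (2 * k) ≠ C.q j) : C.HasBadDownNeighbor X Y :=
  hasBadDownNeighbor_swap hX hi hj
    (.odd_swap ((hg.erase_left hq).insert_left hp) (by rwa [card_insert_p_erase_q hX hi hj]))

lemma exists_isZigzag_avoiding_q (hg : IsZigzag (X ∪ C.Q) Y (2 * C.t + 1) g)
    (hmax : altLen (X ∪ C.Q) Y ≤ 2 * C.t + 1) (hq : ∀ i ≤ C.t, g (2 * i) = C.q i)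
    (hE : C.t + 1 < ((X ∪ C.Q) \ Y).card) :
    ∃ j ≤ C.t, ∃ g', IsZigzag (X ∪ C.Q) Y (2 * C.t + 1) g' ∧
      (∀ k, 2 * k < 2 * C.t + 1 → g' (2 * k) ≠ C.q j) ∧ ∀ k, g' (2 * k + 1) = g (2 * k + 1) := by
  obtain ⟨ξ, hξ, hξQ⟩ : ∃ ξ ∈ (X ∪ C.Q) \ Y, ξ ∉ C.Q :=
    exists_mem_notMem_of_card_lt_card (by rwa [card_Q])
  have hne : ∀ j < 2 * C.t + 1, g j ≠ ξ := forall_lt_of_even_of_odd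
    (fun i hi he => hξQ (he ▸ hq i (by omega) ▸ q_mem_Q (by omega)))
    (fun i hi he => (mem_sdiff.1 hξ).2 (he ▸ (mem_sdiff.1 (hg.mem_odd hi)).1))
  obtain ⟨m, hm, hmod, hg'⟩ :=
    hg.exchange_of_altLen_le hmax (π := 0) ((mem_altSide_of_even rfl).2 hξ) hne
  obtain ⟨j, rfl⟩ : ∃ j, m = 2 * j := ⟨m / 2, by omega⟩
  refine ⟨j, by omega, _, hg', fun k hk => ?_, fun k => Function.update_of_ne (by omega) _ _⟩
  rw [← hq j (by omega)]
  exact hg.update_apply_ne hm hk (hne _ hm).symm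

lemma exists_isZigzag_avoiding_p (hX : Disjoint X (C.P ∪ C.Q)) (hYP : Y ≠ X ∪ C.P)
    (hg : IsZigzag (X ∪ C.Q) Y (2 * C.t + 1) g) (hmax : altLen (X ∪ C.Q) Y ≤ 2 * C.t + 1)
    (hcard : (X ∪ C.Q).card = Y.card + 1) (hQ : ∀ j ≤ C.t, C.q j ∉ Y) :
    ∃ i < C.t, ∃ g', IsZigzag (X ∪ C.Q) Y (2 * C.t + 1) g' ∧
      (∀ k, 2 * k + 1 < 2 * C.t + 1 → g' (2 * k + 1) ≠ C.p i) ∧ ∀ k, g' (2 * k) = g (2 * k) := by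
  by_cases hfree : ∃ i < C.t, ∀ k, 2 * k + 1 < 2 * C.t + 1 → g (2 * k + 1) ≠ C.p i
  · obtain ⟨i, hi, hne⟩ := hfree
    exact ⟨i, hi, g, hg, hne, fun _ => rfl⟩
  push Not at hfree
  have hp : ∀ i < C.t, g (2 * i + 1) = C.p i :=
    hg.odd_eq (by omega) p_strictMonoOn fun j hj => hfree j hj
  -- Otherwise `Y \ (X ∪ Q) = P` and `(X ∪ Q) \ Y = Q`, that is, `Y = X ∪ P`.
  obtain ⟨δ, hδ, hδP⟩ : ∃ δ ∈ Y \ (X ∪ C.Q), δ ∉ C.P := by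
    by_contra hno
    push Not at hno
    have hD : Y \ (X ∪ C.Q) = C.P := by
      refine subset_antisymm hno fun x hx => ?_
      obtain ⟨i, hi, rfl⟩ := mem_P.1 hx
      rw [← hp i hi]
      exact hg.mem_odd (by omega)
    have hE : (X ∪ C.Q) \ Y = C.Q := by
      refine (eq_of_subset_of_card_le (fun x hx => ?_) ?_).symm
      · obtain ⟨j, hj, rfl⟩ := mem_Q.1 hx
        exact mem_sdiff.2 ⟨q_mem_B hj, hQ j hj⟩
      · have := card_add_card_sdiff Y (X ∪ C.Q)
        rw [hD, card_P] at this
        rw [card_Q]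
        omega
    exact hYP (eq_union_of_sdiff_eq (disjoint_of_subset_right subset_union_right hX) hD hE)
  have hne : ∀ j < 2 * C.t + 1, g j ≠ δ := forall_lt_of_even_of_odd
    (fun i hi he => (mem_sdiff.1 hδ).2 (he ▸ (mem_sdiff.1 (hg.mem_even hi)).1))
    (fun i hi he => hδP (he ▸ hp i (by omega) ▸ p_mem_P (by omega)))
  obtain ⟨m, hm, hmod, hg'⟩ :=
    hg.exchange_of_altLen_le hmax (π := 1) ((mem_altSide_of_odd rfl).2 hδ) hne
  obtain ⟨i, rfl⟩ : ∃ i, m = 2 * i + 1 := ⟨m / 2, by omega⟩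
  refine ⟨i, by omega, _, hg', fun k hk => ?_, fun k => Function.update_of_ne (by omega) _ _⟩
  rw [← hp i (by omega)]
  exact hg.update_apply_ne hm hk (hne _ hm).symm

lemma hasBadDownNeighbor_of_odd_swap_of_card_add_two_le (hX : Disjoint X (C.P ∪ C.Q))
    (hg : IsZigzag (X ∪ C.Q) Y (2 * C.t + 1) g) (hmax : altLen (X ∪ C.Q) Y ≤ 2 * C.t + 1)
    (hcard : Y.card + 2 ≤ (X ∪ C.Q).card) : C.HasBadDownNeighbor X Y := by
  have hcard' : ∀ j ≤ C.t, Y.card < ((X ∪ C.Q).erase (C.q j)).card := fun j hj => by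
    have := card_erase_q (X := X) (C := C) hj
    omega
  by_cases hfree : ∃ j ≤ C.t, ∀ i, 2 * i < 2 * C.t + 1 → g (2 * i) ≠ C.q j
  · obtain ⟨j, hj, hne⟩ := hfree
    exact hasBadDownNeighbor_erase hX hj (.odd_swap (hg.erase_left hne) (hcard' j hj))
  push Not at hfree
  have hq : ∀ i ≤ C.t, g (2 * i) = C.q i := fun i hi =>
    hg.even_eq (by omega) q_strictMonoOn (fun j hj => hfree j (by omega)) i (by omega)
  obtain ⟨j, hj, g', hg', hne, -⟩ := exists_isZigzag_avoiding_q hg hmax hq (by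
    have := hg.card_odd_le
    have := card_add_card_sdiff Y (X ∪ C.Q)
    omega)
  exact hasBadDownNeighbor_erase hX hj (.odd_swap (hg'.erase_left hne) (hcard' j hj))

lemma hasBadDownNeighbor_of_odd_swap_of_q_mem (hX : Disjoint X (C.P ∪ C.Q))
    (hg : IsZigzag (X ∪ C.Q) Y (2 * C.t + 1) g) (hcard : (X ∪ C.Q).card = Y.card + 1)
    {j : ℕ} (hj : j ≤ C.t) (hqY : C.q j ∈ Y) : C.HasBadDownNeighbor X Y := by
  have hne : ∀ m < 2 * C.t + 1, g m ≠ C.q j := forall_lt_of_even_of_odd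
    (fun i hi he => (mem_sdiff.1 (hg.mem_even hi)).2 (he ▸ hqY))
    (fun i hi he => (mem_sdiff.1 (hg.mem_odd hi)).2 (he ▸ q_mem_B hj))
  have hg1 := hg.erase_left fun i hi => hne (2 * i) hi
  rcases hg1.exchange (π := 1) ((mem_altSide_of_odd rfl).2 (by simp [hqY])) hne with
    ⟨m, hm, hmod, hg'⟩ | ⟨-, hg'⟩ | ⟨-, hg'⟩
  · obtain ⟨k, rfl⟩ : ∃ k, m = 2 * k + 1 := ⟨m / 2, by omega⟩
    obtain ⟨i, hi, hfree⟩ := exists_p_notMem (C := C)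
      (((range C.t).erase k).image fun i => g (2 * i + 1))
      (card_image_le.trans_lt (by
        simp [card_erase_of_mem (mem_range.2 (by omega : k < C.t))]
        omega))
    refine hasBadDownNeighbor_swap hX hi hj
      (.odd_swap (hg'.insert_left fun l hl => ?_) (by rw [card_insert_p_erase_q hX hi hj]; omega))
    rcases eq_or_ne l k with rfl | hlk
    · rw [Function.update_self]
      exact (p_ne_q hi hj).symm
    · rw [Function.update_of_ne (by omega)]
      exact fun he => hfree (mem_image.2 ⟨l, mem_erase.2 ⟨hlk, mem_range.2 (by omega)⟩, he⟩)
  · exact hasBadDownNeighbor_erase hX hj (.long hg')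
  · exact hasBadDownNeighbor_erase hX hj (.long_swap hg')

lemma hasBadDownNeighbor_of_odd_swap_of_forall_q_notMem (hX : Disjoint X (C.P ∪ C.Q))
    (hYP : Y ≠ X ∪ C.P) (hg : IsZigzag (X ∪ C.Q) Y (2 * C.t + 1) g)
    (hmax : altLen (X ∪ C.Q) Y ≤ 2 * C.t + 1) (hcard : (X ∪ C.Q).card = Y.card + 1)
    (hQ : ∀ j ≤ C.t, C.q j ∉ Y) : C.HasBadDownNeighbor X Y := by
  have hlt : Y.card < (X ∪ C.Q).card := by omega
  by_cases hfree : ∃ j ≤ C.t, ∀ i, 2 * i < 2 * C.t + 1 → g (2 * i) ≠ C.q j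
  · obtain ⟨j, hj, hqj⟩ := hfree
    obtain ⟨i, hi, g', hg', hpi, heven⟩ := exists_isZigzag_avoiding_p hX hYP hg hmax hcard hQ
    exact hasBadDownNeighbor_of_odd_swap_of_avoiding hX hg' hlt hi hj hpi
      fun k hk => heven k ▸ hqj k hk
  push Not at hfree
  have hq : ∀ i ≤ C.t, g (2 * i) = C.q i := fun i hi =>
    hg.even_eq (by omega) q_strictMonoOn (fun j hj => hfree j (by omega)) i (by omega)
  by_cases hp : ∃ i < C.t, C.p i ∉ Y
  · obtain ⟨i, hi, hpi⟩ := hp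
    obtain ⟨k, hk, g', hg'⟩ := exists_isZigzag_swap_of_p_notMem le_rfl (by omega) hg hq hi hpi
    exact hasBadDownNeighbor_swap hX hi hk (.odd_swap hg' (by rwa [card_insert_p_erase_q hX hi hk]))
  push Not at hp
  obtain ⟨i, hi, g1, hg1, hpi, heven⟩ := exists_isZigzag_avoiding_p hX hYP hg hmax hcard hQ
  have hD := hg1.card_odd_lt (x := C.p i) (by simp [hp i hi, p_notMem_B hX hi]) hpi
  obtain ⟨j, hj, g2, hg2, hqj, hodd⟩ :=
    exists_isZigzag_avoiding_q hg1 hmax (fun k hk => heven k ▸ hq k hk) (by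
    have := card_add_card_sdiff Y (X ∪ C.Q)
    omega)
  exact hasBadDownNeighbor_of_odd_swap_of_avoiding hX hg2 hlt hi hj
    (fun k hk => hodd k ▸ hpi k hk) hqj

lemma hasBadDownNeighbor_of_odd_swap (hX : Disjoint X (C.P ∪ C.Q)) (hYP : Y ≠ X ∪ C.P)
    (hg : IsZigzag (X ∪ C.Q) Y (2 * C.t + 1) g) (hmax : altLen (X ∪ C.Q) Y ≤ 2 * C.t + 1)
    (hcard : Y.card < (X ∪ C.Q).card) : C.HasBadDownNeighbor X Y := by
  rcases Nat.lt_or_ge (Y.card + 1) (X ∪ C.Q).card with hcard2 | hcard1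
  · exact hasBadDownNeighbor_of_odd_swap_of_card_add_two_le hX hg hmax hcard2
  by_cases hQ : ∃ j ≤ C.t, C.q j ∈ Y
  · obtain ⟨j, hj, hqY⟩ := hQ
    exact hasBadDownNeighbor_of_odd_swap_of_q_mem hX hg (by omega) hj hqY
  · push Not at hQ
    exact hasBadDownNeighbor_of_odd_swap_of_forall_q_notMem hX hYP hg hmax (by omega) hQ

theorem hasBadDownNeighbor (hX : Disjoint X (C.P ∪ C.Q)) (hYP : Y ≠ X ∪ C.P)
    (h : HasObstruction C.t Y (X ∪ C.Q)) : C.HasBadDownNeighbor X Y := by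
  by_cases hlong : 2 * C.t + 2 ≤ altLen Y (X ∪ C.Q)
  · obtain ⟨g, hg | hg⟩ := le_altLen_iff.1 hlong
    exacts [hasBadDownNeighbor_of_long hX hg, hasBadDownNeighbor_of_long_swap hX hg]
  rcases h with hg | hg | ⟨hg, hcard⟩ | ⟨hg, hcard⟩
  · exact hasBadDownNeighbor_of_long hX hg
  · exact hasBadDownNeighbor_of_long_swap hX hg
  · exact hasBadDownNeighbor_of_odd hX hg hcard
  · exact hasBadDownNeighbor_of_odd_swap hX hYP hg (by rw [altLen_comm]; omega) hcard

def ofFin {t : ℕ} (p : Fin t → ℕ) (q : Fin (t + 1) → ℕ)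
    (h : ∀ i : Fin t, q i.castSucc < p i ∧ p i < q i.succ) : Interlacing where
  t := t
  q j := if hj : j < t + 1 then q ⟨j, hj⟩ else 0
  p i := if hi : i < t then p ⟨i, hi⟩ else 0
  q_lt_p i hi := by simpa [hi, show i < t + 1 by omega] using (h ⟨i, hi⟩).1
  p_lt_q i hi := by simpa [hi] using (h ⟨i, hi⟩).2

section

variable {t : ℕ} {p : Fin t → ℕ} {q : Fin (t + 1) → ℕ}
  {h : ∀ i : Fin t, q i.castSucc < p i ∧ p i < q i.succ}

lemma ofFin_Q : (ofFin p q h).Q = univ.image q := by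
  ext x
  simp only [Q, ofFin, mem_image, mem_range, mem_univ, true_and]
  constructor
  · rintro ⟨j, hj, rfl⟩
    exact ⟨⟨j, hj⟩, by simp [hj]⟩
  · rintro ⟨j, rfl⟩
    exact ⟨j, j.2, dif_pos j.2⟩

lemma ofFin_P : (ofFin p q h).P = univ.image p := by
  ext x
  simp only [P, ofFin, mem_image, mem_range, mem_univ, true_and]
  constructor
  · rintro ⟨i, hi, rfl⟩
    exact ⟨⟨i, hi⟩, by simp [hi]⟩
  · rintro ⟨i, rfl⟩
    exact ⟨i, i.2, dif_pos i.2⟩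

end

end Interlacing

theorem bad_pair_down_neighbor_general (r n : ℕ) (hr : Odd r)
    (p : Fin ((r + 1) / 2) → ℕ) (q : Fin ((r + 1) / 2 + 1) → ℕ)
    (hchain : ∀ i : Fin ((r + 1) / 2), q i.castSucc < p i ∧ p i < q i.succ)
    (P Q : Finset ℕ)
    (hP : P = Finset.image p Finset.univ) (hQ : Q = Finset.image q Finset.univ)
    (X : Finset ℕ) (hX : X ⊆ Finset.Icc 1 n \ (P ∪ Q))
    (Y : Finset ℕ)
    (hYP : Y ≠ X ∪ P)
    (hbad : ¬ WeaklySep r Y (X ∪ Q)) :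
    ∃ S : Finset ℕ,
      ((∃ b ∈ Q, S = Q.erase b) ∨ ∃ a ∈ P, ∃ b ∈ Q, S = insert a (Q.erase b)) ∧
      ¬ WeaklySep r Y (X ∪ S) := by
  set C := Interlacing.ofFin p q hchain
  have hCP : C.P = P := hP ▸ Interlacing.ofFin_P
  have hCQ : C.Q = Q := hQ ▸ Interlacing.ofFin_Q
  have hrt : r + 2 = 2 * C.t + 1 := by
    obtain ⟨k, rfl⟩ := hr
    show 2 * k + 1 + 2 = 2 * ((2 * k + 1 + 1) / 2) + 1
    omega
  have hdisj : Disjoint X (C.P ∪ C.Q) := by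
    rw [hCP, hCQ]
    exact disjoint_of_subset_left hX sdiff_disjoint
  obtain ⟨S, hS, hobs⟩ := C.hasBadDownNeighbor hdisj (hCP ▸ hYP)
    ((not_weaklySep_iff hrt).1 (hCQ ▸ hbad))
  exact ⟨S, hCP ▸ hCQ ▸ hS, (not_weaklySep_iff hrt).2 hobs⟩

/-- (Theorem 3(ii)) if Y is not weakly r-separated from X ∪ Q then
Y is not weakly r-separated from X ∪ S for some S in the lower neighbor set
N↓(P,Q) = {Q∖{q} : q ∈ Q} ∪ {(Q∖{q})∪{p} : p ∈ P, q ∈ Q}. -/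
theorem bad_pair_down_neighbor (r n : ℕ) (hr : Odd r)
    (p : Fin ((r + 1) / 2) → ℕ) (q : Fin ((r + 1) / 2 + 1) → ℕ)
    (hp : ∀ i, p i ∈ Finset.Icc 1 n) (hq : ∀ i, q i ∈ Finset.Icc 1 n)
    (hchain : ∀ i : Fin ((r + 1) / 2), q i.castSucc < p i ∧ p i < q i.succ)
    (P Q : Finset ℕ)
    (hP : P = Finset.image p Finset.univ) (hQ : Q = Finset.image q Finset.univ)
    (X : Finset ℕ) (hX : X ⊆ Finset.Icc 1 n \ (P ∪ Q))
    (Y : Finset ℕ) (hYsub : Y ⊆ Finset.Icc 1 n)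
    (hYP : Y ≠ X ∪ P) (hYQ : Y ≠ X ∪ Q)
    (hbad : ¬ WeaklySep r Y (X ∪ Q)) :
    ∃ S : Finset ℕ,
      ((∃ b ∈ Q, S = Q.erase b) ∨ ∃ a ∈ P, ∃ b ∈ Q, S = insert a (Q.erase b)) ∧
      ¬ WeaklySep r Y (X ∪ S) :=
  bad_pair_down_neighbor_general r n hr p q hchain P Q hP hQ X hX Y hYP hbad
end

section
/- Let s be a positive odd integer and m a positive integer. Suppose X ⊆ [m] can be written as a union of at most (s+1)/2 intervals of [m], and let Y ⊆ [m] satisfy |Y| ≤ |X|. Then X and Y are weakly s-separated. -/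
/-!
Split an alternating sequence for `X`, `Y` into its terms in `X \ Y` and in `Y \ X`. Between two
terms in `X \ Y` lies a term outside `X`, so they lie in different intervals of `X`; with `k`
intervals there are at most `k` such terms, so the sequence has length at most `2k + 1 = s + 2`, and
length `s + 2` forces it to start and end in `Y \ X`. If `X \ Y` had an element below its first term
or above its last one, adding that element would give a longer sequence, so `Y` surrounds `X`.
-/

open Finset

/-- `X` is a union of at most `k` intervals of `[m]`. -/
def UnionIntervals (m k : ℕ) (X : Finset ℕ) : Prop :=
  ∃ k' ≤ k, ∃ e : Fin k' → ℕ × ℕ,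
    (∀ j, 1 ≤ (e j).1 ∧ (e j).1 ≤ (e j).2 ∧ (e j).2 ≤ m) ∧
    X = Finset.univ.sup fun j => Finset.Icc (e j).1 (e j).2

def IsAltSeqFrom (A B : Finset ℕ) {n : ℕ} (f : Fin n → ℕ) : Prop :=
  StrictMono f ∧ ∀ j : Fin n, f j ∈ if (j : ℕ) % 2 = 0 then A \ B else B \ A

namespace IsAltSeqFrom

variable {A B : Finset ℕ} {n : ℕ}

lemma tail {f : Fin (n + 1) → ℕ} (hf : IsAltSeqFrom B A f) : IsAltSeqFrom A B (Fin.tail f) := by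
  refine ⟨hf.1.comp Fin.strictMono_succ, fun j => ?_⟩
  have h := hf.2 j.succ
  rw [Fin.val_succ] at h
  simp only [Fin.tail]
  split_ifs at h ⊢ <;> first | exact h | omega

lemma cons {f : Fin (n + 1) → ℕ} (hf : IsAltSeqFrom A B f) {a : ℕ} (ha : a ∈ B \ A)
    (hlt : a < f 0) : IsAltSeqFrom B A (Fin.cons a f : Fin (n + 2) → ℕ) := by
  refine ⟨Fin.strictMono_cons.2 ⟨fun j => hlt.trans_le (hf.1.monotone (Fin.zero_le j)), hf.1⟩,
    Fin.cases (by simpa using ha) fun j => ?_⟩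
  have h := hf.2 j
  rw [Fin.cons_succ, Fin.val_succ]
  split_ifs at h ⊢ <;> first | exact h | omega

lemma snoc {f : Fin (n + 1) → ℕ} (hf : IsAltSeqFrom A B f) {c : ℕ}
    (hc : c ∈ if (n + 1) % 2 = 0 then A \ B else B \ A) (hlt : f (Fin.last n) < c) :
    IsAltSeqFrom A B (Fin.snoc f c : Fin (n + 2) → ℕ) := by
  refine ⟨Fin.strictMono_iff_lt_succ.2 (Fin.lastCases ?_ fun j => ?_),
    Fin.lastCases ?_ fun j => ?_⟩
  · simpa using hlt
  · rw [Fin.succ_castSucc, Fin.snoc_castSucc, Fin.snoc_castSucc]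
    exact hf.1 j.castSucc_lt_succ
  · simpa using hc
  · simpa using hf.2 j

lemma length_le_two_mul {ι : Type*} [Fintype ι] {lo hi : ι → ℕ} {X Y : Finset ℕ}
    (hX : X = univ.sup fun i => Icc (lo i) (hi i)) {f : Fin n → ℕ} (hf : IsAltSeqFrom X Y f) :
    n ≤ 2 * Fintype.card ι := by
  have hpos (i : Fin ((n + 1) / 2)) : 2 * (i : ℕ) < n := by omega
  have hin (i : Fin ((n + 1) / 2)) : ∃ j, f ⟨2 * i, hpos i⟩ ∈ Icc (lo j) (hi j) := by
    have h := hf.2 ⟨2 * i, hpos i⟩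
    rw [if_pos (by simp), mem_sdiff, hX, mem_sup] at h
    obtain ⟨⟨j, -, hj⟩, -⟩ := h
    exact ⟨j, hj⟩
  choose φ hφ using hin
  have hsep {i i' : Fin ((n + 1) / 2)} (hlt : i < i') : φ i ≠ φ i' := by
    intro heq
    have hgap := hf.2 ⟨2 * i + 1, by omega⟩
    rw [if_neg (by simp), mem_sdiff] at hgap
    refine hgap.2 (hX ▸ mem_sup.2 ⟨φ i', mem_univ _, ?_⟩)
    have hi := hφ i
    have hi' := hφ i'
    rw [heq, mem_Icc] at hi
    rw [mem_Icc] at hi' ⊢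
    exact ⟨hi.1.trans (hf.1 (by simp)).le,
      (hf.1.monotone (Fin.mk_le_mk.2 (by omega))).trans hi'.2⟩
  have hinj : Function.Injective φ := fun i i' heq => by
    rcases lt_trichotomy i i' with hlt | rfl | hgt
    exacts [absurd heq (hsep hlt), rfl, absurd heq.symm (hsep hgt)]
  have := Fintype.card_le_of_injective φ hinj
  simp only [Fintype.card_fin] at this
  omega

lemma length_le_two_mul_add_one {ι : Type*} [Fintype ι] {lo hi : ι → ℕ} {X Y : Finset ℕ}
    (hX : X = univ.sup fun i => Icc (lo i) (hi i)) {f : Fin n → ℕ} (hf : IsAltSeqFrom Y X f) :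
    n ≤ 2 * Fintype.card ι + 1 := by
  cases n with
  | zero => omega
  | succ n => exact Nat.succ_le_succ (hf.tail.length_le_two_mul hX)

end IsAltSeqFrom

lemma IsAltSeq.isAltSeqFrom_or {A B : Finset ℕ} {n : ℕ} {f : Fin n → ℕ} (hf : IsAltSeq A B f) :
    IsAltSeqFrom A B f ∨ IsAltSeqFrom B A f := by
  obtain ⟨hmono, ⟨h0, h1⟩ | ⟨h0, h1⟩⟩ := hf
  · refine Or.inl ⟨hmono, fun j => ?_⟩
    split_ifs with h
    exacts [h0 j h, h1 j (by omega)]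
  · refine Or.inr ⟨hmono, fun j => ?_⟩
    split_ifs with h
    exacts [h0 j h, h1 j (by omega)]

section altLen

variable {A B : Finset ℕ} {N : ℕ}

lemma zero_mem_altLengths : 0 ∈ {n : ℕ | ∃ f : Fin n → ℕ, IsAltSeq A B f} :=
  ⟨Fin.elim0, fun i => i.elim0, Or.inl ⟨fun j => j.elim0, fun j => j.elim0⟩⟩

lemma altLen_le (h : ∀ n (f : Fin n → ℕ), IsAltSeq A B f → n ≤ N) : altLen A B ≤ N :=
  csSup_le ⟨0, zero_mem_altLengths⟩ fun n ⟨f, hf⟩ => h n f hf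

lemma exists_isAltSeq_of_altLen_eq (h : ∀ n (f : Fin n → ℕ), IsAltSeq A B f → n ≤ N) {n : ℕ}
    (hn : altLen A B = n) : ∃ f : Fin n → ℕ, IsAltSeq A B f :=
  hn ▸ Nat.sSup_mem ⟨0, zero_mem_altLengths⟩ ⟨N, fun n ⟨f, hf⟩ => h n f hf⟩

end altLen

lemma surrounds_of_lt {A B : Finset ℕ} {b b' : ℕ} (hb : b ∈ A \ B) (hb' : b' ∈ A \ B)
    (hmin : ∀ a ∈ B \ A, b < a) (hmax : ∀ a ∈ B \ A, a < b') : Surrounds A B := by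
  constructor
  · refine (Finset.min_le hb).trans_lt ?_
    rw [Finset.min_eq_inf_withTop, Finset.lt_inf_iff (WithTop.coe_lt_top b)]
    exact fun a ha => WithTop.coe_lt_coe.2 (hmin a ha)
  · refine lt_of_lt_of_le ?_ (Finset.le_max hb')
    rw [Finset.max_eq_sup_withBot, Finset.sup_lt_iff (WithBot.bot_lt_coe b')]
    exact fun a ha => WithBot.coe_lt_coe.2 (hmax a ha)

lemma IsAltSeqFrom.surrounds {X Y : Finset ℕ} {k : ℕ} {f : Fin (2 * k + 1) → ℕ}
    (hf : IsAltSeqFrom Y X f)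
    (hXY : ∀ {n} (g : Fin n → ℕ), IsAltSeqFrom X Y g → n ≤ 2 * k)
    (hYX : ∀ {n} (g : Fin n → ℕ), IsAltSeqFrom Y X g → n ≤ 2 * k + 1) : Surrounds Y X := by
  have hfirst : f 0 ∈ Y \ X := by simpa using hf.2 0
  have hlast : f (Fin.last (2 * k)) ∈ Y \ X := by simpa using hf.2 (Fin.last _)
  refine surrounds_of_lt hfirst hlast (fun a ha => ?_) (fun a ha => ?_)
  · by_contra! hle
    have hlt : a < f 0 :=
      hle.lt_of_ne fun h => (mem_sdiff.1 hfirst).2 (h ▸ (mem_sdiff.1 ha).1)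
    have := hXY _ (hf.cons ha hlt)
    omega
  · by_contra! hle
    have hlt : f (Fin.last (2 * k)) < a :=
      hle.lt_of_ne fun h => (mem_sdiff.1 hlast).2 (h ▸ (mem_sdiff.1 ha).1)
    have := hYX _ (hf.snoc (by rwa [if_neg (by omega)]) hlt)
    omega

theorem unionIntervals_weaklySep_general (s m : ℕ) (hs : Odd s)
    (X Y : Finset ℕ)
    (hXI : UnionIntervals m ((s + 1) / 2) X)
    (hcard : Y.card ≤ X.card) :
    WeaklySep s X Y := by
  obtain ⟨t, rfl⟩ := hs
  obtain ⟨k, hk, e, -, hXe⟩ := hXI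
  have hXY {n} (g : Fin n → ℕ) (hg : IsAltSeqFrom X Y g) : n ≤ 2 * (t + 1) := by
    have := hg.length_le_two_mul (lo := fun j => (e j).1) (hi := fun j => (e j).2) hXe
    rw [Fintype.card_fin] at this
    omega
  have hYX {n} (g : Fin n → ℕ) (hg : IsAltSeqFrom Y X g) : n ≤ 2 * (t + 1) + 1 := by
    have := hg.length_le_two_mul_add_one (lo := fun j => (e j).1) (hi := fun j => (e j).2) hXe
    rw [Fintype.card_fin] at this
    omega
  have hbound (n) (f : Fin n → ℕ) (hf : IsAltSeq X Y f) : n ≤ 2 * t + 1 + 2 :=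
    hf.isAltSeqFrom_or.elim (fun h => (hXY f h).trans (by omega)) (hYX f)
  refine ⟨altLen_le hbound, fun hlen => Or.inr ⟨?_, hcard⟩⟩
  obtain ⟨f, hf⟩ := exists_isAltSeq_of_altLen_eq hbound (hlen.trans (by ring : _ = 2 * (t + 1) + 1))
  rcases hf.isAltSeqFrom_or with hf | hf
  · have := hXY f hf
    omega
  · exact hf.surrounds hXY hYX

/-- if X ⊆ [m] is a union of at most (s+1)/2 intervals and
|Y| ≤ |X|, then X and Y are weakly s-separated. -/
theorem unionIntervals_weaklySep (s m : ℕ) (hs : Odd s) (hm : 0 < m)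
    (X Y : Finset ℕ) (hX : X ⊆ Finset.Icc 1 m)
    (hXI : UnionIntervals m ((s + 1) / 2) X)
    (hY : Y ⊆ Finset.Icc 1 m) (hcard : Y.card ≤ X.card) :
    WeaklySep s X Y :=
  unionIntervals_weaklySep_general s m hs X Y hXI hcard
end

section
/- Fix integers n ≥ d ≥ 1. The directed graph Γ_{n,d} whose vertices are all cubes of Z(n,d) and whose edges are the pairs (C, C') of cubes such that C immediately precedes C' is acyclic, i.e., contains no directed cycle. -/
open Finset

/-- A cube of Z(n,d): a pair (X | T) with |T| = d, X disjoint from T, and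
X ∪ T ⊆ [n].  `C.1` is the root and `C.2` the type. -/
def IsCube (n d : ℕ) (C : Finset ℕ × Finset ℕ) : Prop :=
  C.2.card = d ∧ Disjoint C.1 C.2 ∧ C.1 ∪ C.2 ⊆ Finset.Icc 1 n

/-- The index of `t` in the increasing enumeration of `T`:
`idxIn T t = i` iff `t` is the `i`-th smallest element of `T` (when `t ∈ T`). -/
def idxIn (T : Finset ℕ) (t : ℕ) : ℕ := (T.filter fun x => x ≤ t).card

/-- `F` is a front facet of the cube `C` (with `|C.2| = d`):
`F = (X | T ∖ {pᵢ})` for `d - i` even, or `F = (X ∪ {pᵢ} | T ∖ {pᵢ})` for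
`d - i` odd, where `p₁ < ⋯ < p_d` enumerate `T = C.2`. -/
def IsFrontFacet (d : ℕ) (C F : Finset ℕ × Finset ℕ) : Prop :=
  ∃ t ∈ C.2,
    (Even (d - idxIn C.2 t) ∧ F = (C.1, C.2.erase t)) ∨
      (¬ Even (d - idxIn C.2 t) ∧ F = (insert t C.1, C.2.erase t))

/-- `F` is a rear facet of the cube `C`: the parities are opposite to those
of the front facets. -/
def IsRearFacet (d : ℕ) (C F : Finset ℕ × Finset ℕ) : Prop :=
  ∃ t ∈ C.2,
    (¬ Even (d - idxIn C.2 t) ∧ F = (C.1, C.2.erase t)) ∨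
      (Even (d - idxIn C.2 t) ∧ F = (insert t C.1, C.2.erase t))

/-- The cube `C` immediately precedes the cube `C'` (both cubes of Z(n,d)):
some rear facet of `C` equals some front facet of `C'`. -/
def ImmPrec (n d : ℕ) (C C' : Finset ℕ × Finset ℕ) : Prop :=
  IsCube n d C ∧ IsCube n d C' ∧ ∃ F, IsRearFacet d C F ∧ IsFrontFacet d C' F


/-!
Attach to a pair `C = (X | T)` the sign vector `height C i = τ(i) · (-1)^#{t ∈ T | i < t}`, where
`τ(i)` is `1`, `0`, `-1` according as `i ∈ X`, `i ∈ T`, or neither. If `C` immediately precedes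
`C'` through the common facet `(Y | S)`, with `C`, `C'` of types `S ∪ {u}`, `S ∪ {w}`, then the two
vectors agree above `max u w`, and the parity rules for rear and front facets give
`height C < height C'` at `max u w` (and rule out `u = w`). Hence `height` increases strictly
in the colexicographic order along every edge, and there is no directed cycle.
-/

open Finset

def height (C : Finset ℕ × Finset ℕ) (i : ℕ) : ℤ :=
  (if i ∈ C.1 then 1 else if i ∈ C.2 then 0 else -1) * (-1) ^ #(C.2.filter (i < ·))

lemma height_erase_insert_of_lt (Y S : Finset ℕ) {u i : ℕ} (h : u < i) :
    height (Y.erase u, insert u S) i = height (Y, S) i := by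
  simp [height, h.ne', filter_insert, h.not_gt]

lemma height_erase_insert_self (Y S : Finset ℕ) (u : ℕ) :
    height (Y.erase u, insert u S) u = 0 := by
  simp [height]

lemma height_of_notMem {Y S : Finset ℕ} {u : ℕ} (hu : u ∉ S) :
    height (Y, S) u = if (u ∈ Y ↔ Even #(S.filter (u < ·))) then 1 else -1 := by
  rcases Nat.even_or_odd #(S.filter (u < ·)) with h | h <;>
    by_cases hY : u ∈ Y <;> simp [height, hu, hY, h, h.neg_one_pow, Nat.not_even_iff_odd]

lemma card_sub_idxIn (T : Finset ℕ) (t : ℕ) :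
    #T - idxIn T t = #((T.erase t).filter (t < ·)) := by
  rw [filter_erase, erase_eq_of_notMem (by simp), idxIn,
    ← card_filter_add_card_filter_not (s := T) (p := (· ≤ t))]
  simp only [not_le, add_tsub_cancel_left]

lemma IsRearFacet.eq_erase_insert {C F : Finset ℕ × Finset ℕ} (hdisj : Disjoint C.1 C.2)
    (h : IsRearFacet #C.2 C F) :
    ∃ u ∉ F.2, C = (F.1.erase u, insert u F.2) ∧ (u ∈ F.1 ↔ Even #(F.2.filter (u < ·))) := by
  obtain ⟨u, hu, h⟩ := h
  have huX : u ∉ C.1 := disjoint_right.1 hdisj hu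
  rw [card_sub_idxIn] at h
  obtain ⟨hpar, rfl⟩ | ⟨hpar, rfl⟩ := h
  · exact ⟨u, by simp, by simp [erase_eq_of_notMem huX, insert_erase hu],
      by simpa [huX] using hpar⟩
  · exact ⟨u, by simp, by simp [erase_insert huX, insert_erase hu], by simpa using hpar⟩

lemma IsFrontFacet.eq_erase_insert {C F : Finset ℕ × Finset ℕ} (hdisj : Disjoint C.1 C.2)
    (h : IsFrontFacet #C.2 C F) :
    ∃ w ∉ F.2, C = (F.1.erase w, insert w F.2) ∧ (w ∈ F.1 ↔ ¬ Even #(F.2.filter (w < ·))) := by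
  obtain ⟨w, hw, h⟩ := h
  have hwX : w ∉ C.1 := disjoint_right.1 hdisj hw
  rw [card_sub_idxIn] at h
  obtain ⟨hpar, rfl⟩ | ⟨hpar, rfl⟩ := h
  · exact ⟨w, by simp, by simp [erase_eq_of_notMem hwX, insert_erase hw],
      by simpa [hwX] using hpar⟩
  · exact ⟨w, by simp, by simp [erase_insert hwX, insert_erase hw], by simpa using hpar⟩

lemma height_lt_of_rear_front {Y S : Finset ℕ} {u w : ℕ} (hu : u ∉ S) (hw : w ∉ S)
    (hrear : u ∈ Y ↔ Even #(S.filter (u < ·))) (hfront : w ∈ Y ↔ ¬ Even #(S.filter (w < ·))) :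
    toColex (height (Y.erase u, insert u S)) < toColex (height (Y.erase w, insert w S)) := by
  have hne : u ≠ w := by rintro rfl; tauto
  have hu₁ : height (Y, S) u = 1 := by rw [height_of_notMem hu, if_pos hrear]
  have hw₁ : height (Y, S) w = -1 := by rw [height_of_notMem hw, if_neg (by tauto)]
  have hagree : ∀ j, max u w < j →
      height (Y.erase u, insert u S) j = height (Y.erase w, insert w S) j := fun j hj => by
    rw [height_erase_insert_of_lt _ _ ((le_max_left u w).trans_lt hj),
      height_erase_insert_of_lt _ _ ((le_max_right u w).trans_lt hj)]
  have hmax :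
      height (Y.erase u, insert u S) (max u w) < height (Y.erase w, insert w S) (max u w) := by
    rcases hne.lt_or_gt with h | h
    · rw [max_eq_right h.le, height_erase_insert_of_lt _ _ h, hw₁, height_erase_insert_self]
      norm_num
    · rw [max_eq_left h.le, height_erase_insert_self, height_erase_insert_of_lt _ _ h, hu₁]
      norm_num
  exact ⟨max u w, hagree, hmax⟩

lemma ImmPrec.height_lt {n d : ℕ} {C C' : Finset ℕ × Finset ℕ} (h : ImmPrec n d C C') :
    toColex (height C) < toColex (height C') := by
  obtain ⟨⟨rfl, hdisj, -⟩, ⟨hd', hdisj', -⟩, F, hrear, hfront⟩ := h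
  rw [← hd'] at hfront
  obtain ⟨u, hu, rfl, hu'⟩ := hrear.eq_erase_insert hdisj
  obtain ⟨w, hw, rfl, hw'⟩ := hfront.eq_erase_insert hdisj'
  exact height_lt_of_rear_front hu hw hu' hw'

theorem immPrec_acyclic_general (n d : ℕ) :
    ∀ C : Finset ℕ × Finset ℕ, ¬ Relation.TransGen (ImmPrec n d) C C := by
  intro C hC
  have hlt := Relation.TransGen.lift (fun C => toColex (height C))
    (fun _ _ h => h.height_lt) C C hC
  rw [Relation.transGen_eq_self] at hlt
  exact lt_irrefl _ hlt

/-- (Proposition 1) the directed graph Γ_{n,d} on cubes of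
Z(n,d), with edges given by the "immediately precedes" relation, is acyclic:
no cube is related to itself by the transitive closure of the relation. -/
theorem immPrec_acyclic (n d : ℕ) (hd : 1 ≤ d) (hdn : d ≤ n) :
    ∀ C : Finset ℕ × Finset ℕ, ¬ Relation.TransGen (ImmPrec n d) C C :=
  immPrec_acyclic_general n d
end

section
/- Fix integers n ≥ d ≥ 1. For a cube C = (X | T) of Z(n,d), define ω(C) := 0 if n ∉ X∪T, ω(C) := 1 if n ∈ T, and ω(C) := 2 if n ∈ X. If a cube C immediately precedes a cube C', then ω(C) ≤ ω(C'). -/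
open Finset

/-- The label ω of a cube: 0 if n ∉ X ∪ T, 1 if n ∈ T, 2 if n ∈ X. -/
def omegaLabel (n : ℕ) (C : Finset ℕ × Finset ℕ) : ℕ :=
  if n ∈ C.2 then 1 else if n ∈ C.1 then 2 else 0

/-! Since `n` is the largest element of `[n]`, when `n` lies in the type of a cube it has index `d`
there, so its facets have parity `d - d = 0`: the front facet drops `n` from the type, the rear facet
moves it into the root. Reading `omegaLabel` on root–type pairs, passing from a cube to a rear facet
can therefore only raise the label, and passing from a front facet to its cube cannot lower it. -/

lemma idxIn_eq_card_of_forall_le {T : Finset ℕ} {t : ℕ} (h : ∀ x ∈ T, x ≤ t) :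
    idxIn T t = T.card :=
  congrArg card (filter_true_of_mem h)

lemma IsCube.le_of_mem_type {n d : ℕ} {C : Finset ℕ × Finset ℕ} (hC : IsCube n d C)
    {x : ℕ} (hx : x ∈ C.2) : x ≤ n :=
  (mem_Icc.mp (hC.2.2 (mem_union_right _ hx))).2

lemma ne_of_not_even_sub_idxIn {n d : ℕ} {T : Finset ℕ} (hcard : T.card = d)
    (hle : ∀ x ∈ T, x ≤ n) {t : ℕ} (hodd : ¬ Even (d - idxIn T t)) : t ≠ n := by
  rintro rfl
  rw [idxIn_eq_card_of_forall_le hle, hcard, Nat.sub_self] at hodd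
  exact hodd Even.zero

lemma omegaLabel_le_of_isRearFacet {n d : ℕ} {C F : Finset ℕ × Finset ℕ}
    (hcard : C.2.card = d) (hle : ∀ x ∈ C.2, x ≤ n) (hF : IsRearFacet d C F) :
    omegaLabel n C ≤ omegaLabel n F := by
  obtain ⟨t, -, ⟨hodd, rfl⟩ | ⟨-, rfl⟩⟩ := hF
  · have htn : t ≠ n := ne_of_not_even_sub_idxIn hcard hle hodd
    simp [omegaLabel, htn.symm]
  · simp only [omegaLabel, mem_erase, mem_insert]
    split_ifs <;> simp_all

lemma omegaLabel_le_of_isFrontFacet {n d : ℕ} {C F : Finset ℕ × Finset ℕ}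
    (hcard : C.2.card = d) (hdisj : Disjoint C.1 C.2) (hle : ∀ x ∈ C.2, x ≤ n)
    (hF : IsFrontFacet d C F) : omegaLabel n F ≤ omegaLabel n C := by
  have hnT : n ∈ C.1 → n ∉ C.2 := fun hn => disjoint_left.mp hdisj hn
  obtain ⟨t, -, ⟨-, rfl⟩ | ⟨hodd, rfl⟩⟩ := hF
  · simp only [omegaLabel, mem_erase]
    split_ifs <;> simp_all
  · have htn : t ≠ n := ne_of_not_even_sub_idxIn hcard hle hodd
    simp only [omegaLabel, mem_erase, mem_insert]
    split_ifs <;> simp_all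

theorem omegaLabel_monotone_general (n d : ℕ)
    (C C' : Finset ℕ × Finset ℕ) (h : ImmPrec n d C C') :
    omegaLabel n C ≤ omegaLabel n C' := by
  obtain ⟨hC, hC', F, hrear, hfront⟩ := h
  calc omegaLabel n C ≤ omegaLabel n F :=
        omegaLabel_le_of_isRearFacet hC.1 (fun _ => hC.le_of_mem_type) hrear
    _ ≤ omegaLabel n C' :=
        omegaLabel_le_of_isFrontFacet hC'.1 hC'.2.1 (fun _ => hC'.le_of_mem_type) hfront

/-- (the Claim) if C immediately precedes C' then ω(C) ≤ ω(C'). -/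
theorem omegaLabel_monotone (n d : ℕ) (hd : 1 ≤ d) (hdn : d ≤ n)
    (C C' : Finset ℕ × Finset ℕ) (h : ImmPrec n d C C') :
    omegaLabel n C ≤ omegaLabel n C' :=
  omegaLabel_monotone_general n d C C' h
end

section
/- Let r be a positive even integer and n = r+2. Then the full power set 2^{[n]} is a weakly r-separated collection; in fact, the only pair of subsets of [n] that is (r+2)-interlaced consists of the set of even elements {2,4,…,r+2} and the set of odd elements {1,3,…,r+1}, which have equal cardinality. Moreover, |2^{[n]}| = 2^{r+2} strictly exceeds C(n,0)+C(n,1)+⋯+C(n,r+1) = 2^{r+2} − 1. -/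
open Finset

/-- `A` surrounds `B` from the right: `max (B \ A) < max (A \ B)`. -/
def SurroundsRight (A B : Finset ℕ) : Prop :=
  (B \ A).max < (A \ B).max

/-- Weak `r`-separation for an even `r`. -/
def WeaklySepE (r : ℕ) (A B : Finset ℕ) : Prop :=
  altLen A B ≤ r + 2 ∧
    (altLen A B = r + 2 →
      SurroundsRight A B ∧ A.card ≤ B.card ∨ SurroundsRight B A ∧ B.card ≤ A.card)

/-!
An alternating sequence is a strictly increasing sequence in `A ∪ B ⊆ [n]`, so it has length at
most `n`; one of length exactly `n` must be `1, 2, …, n`, so the parity of `x` alone decides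
whether `x ∈ A \ B` or `x ∈ B \ A`. Hence the only `n`-interlaced pair is {evens, odds}. For even
`n` these have equal size, and since `n` is even the evens surround the odds from the right.
The count is `∑_{i ≤ n} C(n, i) = 2 ^ n` minus the term `C(n, n) = 1`.
-/

namespace IsAltSeq

variable {A B : Finset ℕ} {m : ℕ} {f : Fin m → ℕ}

lemma of_fin_zero (g : Fin 0 → ℕ) : IsAltSeq A B g :=
  ⟨fun a => a.elim0, .inl ⟨fun j => j.elim0, fun j => j.elim0⟩⟩

lemma mem_union (hf : IsAltSeq A B f) (j : Fin m) : f j ∈ A ∪ B := by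
  rcases hf.2 with ⟨h0, h1⟩ | ⟨h0, h1⟩ <;> rcases Nat.mod_two_eq_zero_or_one j with hj | hj
  · exact mem_union_left _ (mem_sdiff.1 (h0 j hj)).1
  · exact mem_union_right _ (mem_sdiff.1 (h1 j hj)).1
  · exact mem_union_right _ (mem_sdiff.1 (h0 j hj)).1
  · exact mem_union_left _ (mem_sdiff.1 (h1 j hj)).1

lemma length_le_card_union (hf : IsAltSeq A B f) : m ≤ (A ∪ B).card := by
  simpa using card_le_card_of_injOn f (s := univ) (fun j _ => hf.mem_union j)
    hf.1.injective.injOn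

end IsAltSeq

section altLen

variable (A B : Finset ℕ)

lemma nonempty_setOf_isAltSeq : {m | ∃ f : Fin m → ℕ, IsAltSeq A B f}.Nonempty :=
  ⟨0, Fin.elim0, .of_fin_zero _⟩

lemma bddAbove_setOf_isAltSeq : BddAbove {m | ∃ f : Fin m → ℕ, IsAltSeq A B f} :=
  ⟨(A ∪ B).card, fun _ ⟨_, hf⟩ => hf.length_le_card_union⟩

lemma altLen_le_card_union : altLen A B ≤ (A ∪ B).card :=
  csSup_le (nonempty_setOf_isAltSeq A B) fun _ ⟨_, hf⟩ => hf.length_le_card_union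

lemma exists_isAltSeq_altLen : ∃ f : Fin (altLen A B) → ℕ, IsAltSeq A B f :=
  Nat.sSup_mem (nonempty_setOf_isAltSeq A B) (bddAbove_setOf_isAltSeq A B)

end altLen

lemma StrictMono.eq_val_add_one_of_mem_Icc {n : ℕ} {f : Fin n → ℕ} (hf : StrictMono f)
    (hmem : ∀ j, f j ∈ Icc 1 n) (j : Fin n) : f j = j + 1 := by
  have hbounds : ∀ j, 1 ≤ f j ∧ f j ≤ n := fun j => mem_Icc.1 (hmem j)
  let g : Fin n → Fin n := fun j => ⟨f j - 1, by have := hbounds j; omega⟩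
  have hg : StrictMono g := fun i k hik => by
    have := hf hik
    have := hbounds i
    simp only [g, Fin.mk_lt_mk]
    omega
  have hgj := congrArg Fin.val (congrFun hg.eq_id j)
  have := hbounds j
  simp only [g, id] at hgj
  omega

lemma eq_filter_odd_even_of_alternating {n : ℕ} {A B : Finset ℕ} (hA : A ⊆ Icc 1 n)
    (hB : B ⊆ Icc 1 n) {f : Fin n → ℕ} (hval : ∀ j, f j = j + 1)
    (h0 : ∀ j : Fin n, (j : ℕ) % 2 = 0 → f j ∈ A \ B)
    (h1 : ∀ j : Fin n, (j : ℕ) % 2 = 1 → f j ∈ B \ A) :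
    A = (Icc 1 n).filter (fun x => x % 2 = 1) ∧ B = (Icc 1 n).filter (fun x => x % 2 = 0) := by
  have hpar : ∀ x ∈ Icc 1 n, (x % 2 = 1 → x ∈ A \ B) ∧ (x % 2 = 0 → x ∈ B \ A) := by
    intro x hx
    obtain ⟨hx1, hxn⟩ := mem_Icc.1 hx
    have hfx : f ⟨x - 1, by omega⟩ = x := by rw [hval]; simp only; omega
    exact ⟨fun hp => hfx ▸ h0 _ (by simp only; omega),
      fun hp => hfx ▸ h1 _ (by simp only; omega)⟩
  constructor <;> ext x <;> simp only [mem_filter]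
  · refine ⟨fun hx => ⟨hA hx, ?_⟩, fun ⟨hx, hp⟩ => (mem_sdiff.1 ((hpar x hx).1 hp)).1⟩
    by_contra hp
    exact (mem_sdiff.1 ((hpar x (hA hx)).2 (by omega))).2 hx
  · refine ⟨fun hx => ⟨hB hx, ?_⟩, fun ⟨hx, hp⟩ => (mem_sdiff.1 ((hpar x hx).2 hp)).1⟩
    by_contra hp
    exact (mem_sdiff.1 ((hpar x (hB hx)).1 (by omega))).2 hx

lemma eq_filter_parity_of_altLen_eq {n : ℕ} {A B : Finset ℕ} (hA : A ⊆ Icc 1 n)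
    (hB : B ⊆ Icc 1 n) (h : altLen A B = n) :
    (A = (Icc 1 n).filter (fun x => x % 2 = 0) ∧ B = (Icc 1 n).filter (fun x => x % 2 = 1)) ∨
      (A = (Icc 1 n).filter (fun x => x % 2 = 1) ∧
        B = (Icc 1 n).filter (fun x => x % 2 = 0)) := by
  have hex := exists_isAltSeq_altLen A B
  rw [h] at hex
  obtain ⟨f, hf⟩ := hex
  have hval := hf.1.eq_val_add_one_of_mem_Icc fun j => union_subset hA hB (hf.mem_union j)
  rcases hf.2 with ⟨h0, h1⟩ | ⟨h0, h1⟩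
  · exact .inr (eq_filter_odd_even_of_alternating hA hB hval h0 h1)
  · exact .inl (eq_filter_odd_even_of_alternating hB hA hval h0 h1).symm

lemma card_filter_even_eq_card_filter_odd {n : ℕ} (hn : Even n) :
    ((Icc 1 n).filter (fun x => x % 2 = 0)).card =
      ((Icc 1 n).filter (fun x => x % 2 = 1)).card := by
  have himage : (Icc 1 n).filter (fun x => x % 2 = 0) =
      ((Icc 1 n).filter (fun x => x % 2 = 1)).image (· + 1) := by
    obtain ⟨k, rfl⟩ := hn
    ext x
    simp only [mem_filter, mem_Icc, mem_image]
    constructor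
    · rintro ⟨⟨hx1, hxn⟩, hp⟩
      exact ⟨x - 1, ⟨⟨by omega, by omega⟩, by omega⟩, by omega⟩
    · rintro ⟨y, ⟨⟨hy1, hyn⟩, hp⟩, rfl⟩
      exact ⟨⟨by omega, by omega⟩, by omega⟩
  rw [himage, card_image_of_injective _ (add_left_injective 1)]

lemma surroundsRight_filter_even_filter_odd {n : ℕ} (hn : Even n) (hpos : 0 < n) :
    SurroundsRight ((Icc 1 n).filter (fun x => x % 2 = 0))
      ((Icc 1 n).filter (fun x => x % 2 = 1)) := by
  have hdisj : Disjoint ((Icc 1 n).filter (fun x => x % 2 = 0))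
      ((Icc 1 n).filter (fun x => x % 2 = 1)) :=
    disjoint_filter.2 fun _ _ h0 h1 => by omega
  have hn2 : n % 2 = 0 := Nat.even_iff.1 hn
  unfold SurroundsRight
  rw [sdiff_eq_self_of_disjoint hdisj, sdiff_eq_self_of_disjoint hdisj.symm]
  calc ((Icc 1 n).filter (fun x => x % 2 = 1)).max ≤ WithBot.some (n - 1) :=
        Finset.max_le fun a ha => WithBot.coe_le_coe.2 <| by
          simp only [mem_filter, mem_Icc] at ha
          omega
    _ < WithBot.some n := WithBot.coe_lt_coe.2 (by omega)
    _ ≤ _ := le_max (mem_filter.2 ⟨mem_Icc.2 ⟨hpos, le_rfl⟩, hn2⟩)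

lemma weaklySepE_of_subset_Icc {r : ℕ} (hr : Even r) {A B : Finset ℕ}
    (hA : A ⊆ Icc 1 (r + 2)) (hB : B ⊆ Icc 1 (r + 2)) : WeaklySepE r A B := by
  have hn : Even (r + 2) := hr.add even_two
  have hcard := card_filter_even_eq_card_filter_odd hn
  have hsurr := surroundsRight_filter_even_filter_odd hn (by omega)
  refine ⟨(altLen_le_card_union A B).trans ((card_le_card (union_subset hA hB)).trans (by simp)),
    fun h => ?_⟩
  rcases eq_filter_parity_of_altLen_eq hA hB h with ⟨rfl, rfl⟩ | ⟨rfl, rfl⟩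
  · exact .inl ⟨hsurr, hcard.le⟩
  · exact .inr ⟨hsurr, hcard.le⟩

lemma Nat.sum_range_choose_eq_two_pow_sub_one (n : ℕ) :
    ∑ i ∈ range n, n.choose i = 2 ^ n - 1 := by
  have := Nat.sum_range_choose n
  rw [sum_range_succ, Nat.choose_self] at this
  omega

theorem even_full_powerset_general (r n : ℕ) (hr : Even r)
    (hn : n = r + 2) :
    (∀ A ⊆ Finset.Icc 1 n, ∀ B ⊆ Finset.Icc 1 n, WeaklySepE r A B) ∧
    (∀ A ⊆ Finset.Icc 1 n, ∀ B ⊆ Finset.Icc 1 n, altLen A B = r + 2 →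
      (A = (Finset.Icc 1 n).filter (fun x => x % 2 = 0) ∧
        B = (Finset.Icc 1 n).filter (fun x => x % 2 = 1)) ∨
      (A = (Finset.Icc 1 n).filter (fun x => x % 2 = 1) ∧
        B = (Finset.Icc 1 n).filter (fun x => x % 2 = 0))) ∧
    ((Finset.Icc 1 n).filter (fun x => x % 2 = 0)).card =
      ((Finset.Icc 1 n).filter (fun x => x % 2 = 1)).card ∧
    (Finset.Icc 1 n).powerset.card = 2 ^ (r + 2) ∧
    (∑ i ∈ Finset.range (r + 2), Nat.choose n i = 2 ^ (r + 2) - 1) ∧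
    ∑ i ∈ Finset.range (r + 2), Nat.choose n i < (Finset.Icc 1 n).powerset.card := by
  subst hn
  have hcard : (Icc 1 (r + 2)).powerset.card = 2 ^ (r + 2) := by simp
  have hsum := Nat.sum_range_choose_eq_two_pow_sub_one (r + 2)
  refine ⟨fun A hA B hB => weaklySepE_of_subset_Icc hr hA hB,
    fun A hA B hB => eq_filter_parity_of_altLen_eq hA hB,
    card_filter_even_eq_card_filter_odd (hr.add even_two), hcard, hsum, ?_⟩
  rw [hsum, hcard]
  exact Nat.sub_lt (by positivity) one_pos

/-- (Remark 2) for even r and n = r + 2, the full power set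
2^[n] is weakly r-separated; the only (r+2)-interlaced pair is the set of
even elements together with the set of odd elements of [n], which have equal
cardinality; and 2^{r+2} strictly exceeds C(n,0) + ⋯ + C(n,r+1) = 2^{r+2} - 1. -/
theorem even_full_powerset (r n : ℕ) (hr : Even r) (hrpos : 0 < r)
    (hn : n = r + 2) :
    (∀ A ⊆ Finset.Icc 1 n, ∀ B ⊆ Finset.Icc 1 n, WeaklySepE r A B) ∧
    (∀ A ⊆ Finset.Icc 1 n, ∀ B ⊆ Finset.Icc 1 n, altLen A B = r + 2 →
      (A = (Finset.Icc 1 n).filter (fun x => x % 2 = 0) ∧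
        B = (Finset.Icc 1 n).filter (fun x => x % 2 = 1)) ∨
      (A = (Finset.Icc 1 n).filter (fun x => x % 2 = 1) ∧
        B = (Finset.Icc 1 n).filter (fun x => x % 2 = 0))) ∧
    ((Finset.Icc 1 n).filter (fun x => x % 2 = 0)).card =
      ((Finset.Icc 1 n).filter (fun x => x % 2 = 1)).card ∧
    (Finset.Icc 1 n).powerset.card = 2 ^ (r + 2) ∧
    (∑ i ∈ Finset.range (r + 2), Nat.choose n i = 2 ^ (r + 2) - 1) ∧
    ∑ i ∈ Finset.range (r + 2), Nat.choose n i < (Finset.Icc 1 n).powerset.card :=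
  even_full_powerset_general r n hr hn
end
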